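/- arXiv:2003.01390 — 9 statements merged into one kernel-verified Lean document; each statement's English description precedes it below -/
import Mathlib

section
/- If a triangle of unit area has sides a ≤ b ≤ c satisfying a² + b² ≤ 4 and c² ≤ 4, then a = b = √2 and c = 2 (i.e., the triangle is an isosceles right triangle with hypotenuse 2). -/
open Set MeasureTheory Real Pointwise

private lemma simplexT_vol :
    volume {p : ℝ × ℝ | 0 ≤ p.1 ∧ 0 ≤ p.2 ∧ p.1 + p.2 ≤ 1} = ENNReal.ofReal (1/2) := by
  set T := {p : ℝ × ℝ | 0 ≤ p.1 ∧ 0 ≤ p.2 ∧ p.1 + p.2 ≤ 1} with hT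
  set R := regionBetween (fun _ => (0:ℝ)) (fun x => 1 - x) (Icc 0 1) with hR
  have hRT : R ⊆ T := by
    rintro ⟨x, y⟩ ⟨hx, hy⟩
    simp only [mem_Icc, mem_Ioo] at hx hy
    exact ⟨hx.1, hy.1.le, by linarith [hy.2]⟩
  have hdiff : T \ R ⊆ (univ ×ˢ {0} : Set (ℝ × ℝ)) ∪ {p : ℝ × ℝ | p.1 + p.2 = 1} := by
    rintro ⟨x, y⟩ ⟨⟨hx, hy, hxy⟩, hnot⟩
    simp only [hR, regionBetween, mem_setOf_eq, mem_Icc, mem_Ioo] at hnot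
    push_neg at hnot
    rcases le_or_gt y 0 with hy' | hy'
    · left; exact ⟨trivial, le_antisymm hy' hy⟩
    · right
      have := hnot ⟨hx, by linarith⟩ hy'
      simp only [mem_setOf_eq]; linarith
  have hnull1 : volume (univ ×ˢ {0} : Set (ℝ × ℝ)) = 0 := by
    rw [Measure.volume_eq_prod, Measure.prod_prod]
    simp
  have hnull2 : volume {p : ℝ × ℝ | p.1 + p.2 = 1} = 0 := by
    have : {p : ℝ × ℝ | p.1 + p.2 = 1}
        = (AffineSubspace.mk' ((1:ℝ), (0:ℝ))
            (LinearMap.ker ((LinearMap.fst ℝ ℝ ℝ) + (LinearMap.snd ℝ ℝ ℝ))) : Set (ℝ × ℝ)) := by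
      ext p
      simp only [mem_setOf_eq, SetLike.mem_coe, AffineSubspace.mem_mk',
        LinearMap.mem_ker, LinearMap.add_apply, LinearMap.fst_apply, LinearMap.snd_apply]
      constructor
      · intro h; simp [Prod.fst_sub, Prod.snd_sub]; linarith
      · intro h; simp [Prod.fst_sub, Prod.snd_sub] at h; linarith
    rw [this]
    apply Measure.addHaar_affineSubspace
    intro h
    have : ((0:ℝ), (0:ℝ)) ∈ (AffineSubspace.mk' ((1:ℝ), (0:ℝ))
        (LinearMap.ker ((LinearMap.fst ℝ ℝ ℝ) + (LinearMap.snd ℝ ℝ ℝ)))) := h ▸ trivial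
    simp [AffineSubspace.mem_mk'] at this
  have hvolR : volume R = ENNReal.ofReal (1/2) := by
    rw [hR, Measure.volume_eq_prod,
      volume_regionBetween_eq_integral (continuous_const.integrableOn_Icc)
      ((by fun_prop : Continuous fun x : ℝ => 1 - x).integrableOn_Icc) measurableSet_Icc
      (fun x hx => by linarith [hx.1, hx.2])]
    have : ∫ y in Icc (0:ℝ) 1, ((fun x : ℝ => 1 - x) - fun _ : ℝ => (0:ℝ)) y = 1/2 := by
      simp only [Pi.sub_apply, sub_zero]
      rw [integral_Icc_eq_integral_Ioc, ← intervalIntegral.integral_of_le zero_le_one,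
        intervalIntegral.integral_sub intervalIntegrable_const intervalIntegral.intervalIntegrable_id]
      norm_num
    rw [this]
  have h1 : volume T ≤ ENNReal.ofReal (1/2) := by
    calc volume T ≤ volume (R ∪ (T \ R)) := measure_mono (by intro x hx; by_cases h : x ∈ R <;> simp [h, hx])
    _ ≤ volume R + volume (T \ R) := measure_union_le _ _
    _ ≤ ENNReal.ofReal (1/2) + 0 := by
        gcongr
        · exact hvolR.le
        · exact le_trans (measure_mono hdiff) (le_trans (measure_union_le _ _) (by rw [hnull1, hnull2]; simp))
    _ = ENNReal.ofReal (1/2) := by simp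
  have h2 : ENNReal.ofReal (1/2) ≤ volume T := hvolR ▸ measure_mono hRT
  exact le_antisymm h1 h2

private lemma simplexE_vol :
    volume {x : EuclideanSpace ℝ (Fin 2) | 0 ≤ x 0 ∧ 0 ≤ x 1 ∧ x 0 + x 1 ≤ 1}
      = ENNReal.ofReal (1/2) := by
  have hT : MeasurableSet {p : ℝ × ℝ | 0 ≤ p.1 ∧ 0 ≤ p.2 ∧ p.1 + p.2 ≤ 1} := by
    apply MeasurableSet.inter (measurableSet_le measurable_const measurable_fst)
    exact MeasurableSet.inter (measurableSet_le measurable_const measurable_snd)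
      (measurableSet_le (measurable_fst.add measurable_snd) measurable_const)
  have hcomp := (volume_preserving_finTwoArrow ℝ).comp
    (EuclideanSpace.volume_preserving_symm_measurableEquiv_toLp (Fin 2))
  have := hcomp.measure_preimage hT.nullMeasurableSet
  rw [← simplexT_vol, ← this]
  rfl

private lemma hull_eq_simplex :
    convexHull ℝ {(0 : EuclideanSpace ℝ (Fin 2)), EuclideanSpace.single 0 1,
        EuclideanSpace.single 1 1}
      = {x : EuclideanSpace ℝ (Fin 2) | 0 ≤ x 0 ∧ 0 ≤ x 1 ∧ x 0 + x 1 ≤ 1} := by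
  apply Subset.antisymm
  · apply convexHull_min
    · rintro x (rfl | rfl | rfl) <;>
        simp [EuclideanSpace.single_apply]
    · have l0 : IsLinearMap ℝ (fun x : EuclideanSpace ℝ (Fin 2) => x 0) :=
        ⟨fun x y => rfl, fun c x => rfl⟩
      have l1 : IsLinearMap ℝ (fun x : EuclideanSpace ℝ (Fin 2) => x 1) :=
        ⟨fun x y => rfl, fun c x => rfl⟩
      have l01 : IsLinearMap ℝ (fun x : EuclideanSpace ℝ (Fin 2) => x 0 + x 1) :=
        ⟨fun x y => by show (x+y) 0 + (x+y) 1 = _; simp [PiLp.add_apply]; ring,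
         fun c x => by show (c • x) 0 + (c • x) 1 = _; simp [PiLp.smul_apply]; ring⟩
      exact ((convex_halfSpace_ge l0 0).inter
        ((convex_halfSpace_ge l1 0).inter (convex_halfSpace_le l01 1)))
  · rintro x ⟨h0, h1, h01⟩
    have hx : x = Finset.univ.centerMass ![1 - x 0 - x 1, x 0, x 1]
        ![(0 : EuclideanSpace ℝ (Fin 2)), EuclideanSpace.single 0 1,
          EuclideanSpace.single 1 1] := by
      rw [Finset.centerMass]
      apply (PiLp.ext ?_).symm
      intro j
      fin_cases j <;>
        · simp only [Fin.sum_univ_three, PiLp.add_apply, PiLp.smul_apply,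
            EuclideanSpace.single_apply]
          simp
          rw [show (1 - x 0 - x 1 + x 0 + x 1) = 1 by ring]
          simp
    rw [hx]
    apply Finset.centerMass_mem_convexHull
    · intro i _
      fin_cases i <;> simp <;> linarith
    · simp [Fin.sum_univ_three]; linarith
    · intro i _
      fin_cases i <;> simp

private lemma triangle_vol (P u v : EuclideanSpace ℝ (Fin 2)) :
    volume (convexHull ℝ {P, P + u, P + v})
      = ENNReal.ofReal (|u 0 * v 1 - u 1 * v 0| / 2) := by
  classical
  set f : EuclideanSpace ℝ (Fin 2) →ₗ[ℝ] EuclideanSpace ℝ (Fin 2) :=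
    { toFun := fun x => x 0 • u + x 1 • v
      map_add' := fun x y => by
        show ((x + y) 0) • u + ((x + y) 1) • v = _
        simp [PiLp.add_apply, add_smul]; abel
      map_smul' := fun c x => by
        show ((c • x) 0) • u + ((c • x) 1) • v = _
        simp [PiLp.smul_apply, smul_smul, smul_add] } with hf
  have himg : f '' {(0 : EuclideanSpace ℝ (Fin 2)), EuclideanSpace.single 0 1,
      EuclideanSpace.single 1 1} = {0, u, v} := by
    simp only [image_insert_eq, image_singleton]
    congr 1
    · simp [hf]
    congr 1
    · show (EuclideanSpace.single 0 1 : EuclideanSpace ℝ (Fin 2)) 0 • u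
        + (EuclideanSpace.single 0 1 : EuclideanSpace ℝ (Fin 2)) 1 • v = u
      simp [EuclideanSpace.single_apply]
    · show ({(EuclideanSpace.single 1 1 : EuclideanSpace ℝ (Fin 2)) 0 • u
        + (EuclideanSpace.single 1 1 : EuclideanSpace ℝ (Fin 2)) 1 • v} : Set _) = {v}
      simp [EuclideanSpace.single_apply]
  have hset : convexHull ℝ {P, P + u, P + v}
      = P +ᵥ (f '' {x : EuclideanSpace ℝ (Fin 2) | 0 ≤ x 0 ∧ 0 ≤ x 1 ∧ x 0 + x 1 ≤ 1}) := by
    rw [← hull_eq_simplex, f.image_convexHull, himg, ← convexHull_vadd]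
    rw [← Set.image_vadd]
    simp only [image_insert_eq, image_singleton, vadd_eq_add]
    congr 2 <;> abel
  have hdet : f.det = u 0 * v 1 - u 1 * v 0 := by
    rw [← LinearMap.det_toMatrix (EuclideanSpace.basisFun (Fin 2) ℝ).toBasis f,
      Matrix.det_fin_two]
    have e0 : f ((EuclideanSpace.basisFun (Fin 2) ℝ).toBasis 0) = u := by
      simp [hf, EuclideanSpace.basisFun_apply, EuclideanSpace.single_apply,
        LinearMap.coe_mk, AddHom.coe_mk]
    have e1 : f ((EuclideanSpace.basisFun (Fin 2) ℝ).toBasis 1) = v := by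
      simp [hf, EuclideanSpace.basisFun_apply, EuclideanSpace.single_apply]
    rw [LinearMap.toMatrix_apply, LinearMap.toMatrix_apply, LinearMap.toMatrix_apply,
      LinearMap.toMatrix_apply, e0, e1]
    simp [OrthonormalBasis.coe_toBasis_repr_apply, EuclideanSpace.basisFun_repr]
    ring
  rw [hset, measure_vadd, Measure.addHaar_image_linearMap, simplexE_vol, hdet,
    ← ENNReal.ofReal_mul (abs_nonneg _)]
  rw [mul_one_div]

private lemma alg_key (a b c p q r s : ℝ) (hd2 : (p*s - q*r)^2 = 4)
    (hb2 : b^2 = p^2+q^2) (ha2 : a^2 = r^2+s^2) (hc2 : c^2 = (p-r)^2+(q-s)^2)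
    (h1 : a^2 + b^2 ≤ 4) (h2 : c^2 ≤ 4) :
    a^2 = 2 ∧ b^2 = 2 ∧ c^2 = 4 := by
  have key : (p * r + q * s) ^ 2 + (p * s - q * r) ^ 2 = (p^2+q^2) * (r^2+s^2) := by ring
  have hab4 : a^2 * b^2 ≥ 4 := by nlinarith [sq_nonneg (p*r + q*s)]
  have hsum : a^2 + b^2 = 4 := by nlinarith [sq_nonneg (a^2 - b^2), sq_nonneg a, sq_nonneg b]
  have hA2 : a^2 = 2 := by nlinarith [sq_nonneg (a^2 - b^2)]
  have hB2 : b^2 = 2 := by linarith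
  have hX : p^2 + q^2 = 2 := by linarith
  have hY : r^2 + s^2 = 2 := by linarith
  have hXY : (p^2+q^2) * (r^2+s^2) = 4 := by rw [hX, hY]; norm_num
  have hI0 : (p * r + q * s)^2 = 0 := by linarith
  have hI : p * r + q * s = 0 := pow_eq_zero_iff (by norm_num) |>.mp hI0
  have hC2 : c^2 = 4 := by
    have hce : c^2 = (p^2+q^2) + (r^2+s^2) - 2*(p*r+q*s) := by rw [hc2]; ring
    linarith
  exact ⟨hA2, hB2, hC2⟩

theorem stmt_0 (A B C : EuclideanSpace ℝ (Fin 2))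
    (a b c : ℝ) (ha : a = dist B C) (hb : b = dist A C) (hc : c = dist A B)
    (hab : a ≤ b) (hbc : b ≤ c)
    (harea : volume (convexHull ℝ {A, B, C}) = 1)
    (h1 : a ^ 2 + b ^ 2 ≤ 4) (h2 : c ^ 2 ≤ 4) :
    a = Real.sqrt 2 ∧ b = Real.sqrt 2 ∧ c = 2 := by
  obtain ⟨u, hu⟩ : ∃ u : EuclideanSpace ℝ (Fin 2), u = A - C := ⟨_, rfl⟩
  obtain ⟨v, hv⟩ : ∃ v : EuclideanSpace ℝ (Fin 2), v = B - C := ⟨_, rfl⟩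
  have hulleq : ({A, B, C} : Set (EuclideanSpace ℝ (Fin 2))) = {C, C + u, C + v} := by
    rw [hu, hv]
    have h1 : C + (A - C) = A := by abel
    have h2 : C + (B - C) = B := by abel
    rw [h1, h2]
    ext x
    simp only [mem_insert_iff, mem_singleton_iff]
    tauto
  have hvol := triangle_vol C u v
  rw [← hulleq, harea] at hvol
  have habs : |u 0 * v 1 - u 1 * v 0| / 2 = 1 := by
    have := hvol.symm
    rwa [ENNReal.ofReal_eq_one] at this
  -- coordinates
  obtain ⟨p, hp⟩ : ∃ p : ℝ, p = u 0 := ⟨_, rfl⟩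
  obtain ⟨q, hq⟩ : ∃ q : ℝ, q = u 1 := ⟨_, rfl⟩
  obtain ⟨r, hr⟩ : ∃ r : ℝ, r = v 0 := ⟨_, rfl⟩
  obtain ⟨s, hs⟩ : ∃ s : ℝ, s = v 1 := ⟨_, rfl⟩
  rw [← hp, ← hq, ← hr, ← hs] at habs
  have hd2 : (p * s - q * r) ^ 2 = 4 := by
    have : |p * s - q * r| = 2 := by linarith
    calc (p * s - q * r) ^ 2 = |p * s - q * r| ^ 2 := (sq_abs _).symm
    _ = 4 := by rw [this]; norm_num
  have norm_sq : ∀ w : EuclideanSpace ℝ (Fin 2), ‖w‖ ^ 2 = w 0 ^ 2 + w 1 ^ 2 := by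
    intro w
    rw [EuclideanSpace.norm_eq]
    rw [Real.sq_sqrt (by positivity)]
    simp [Fin.sum_univ_two, sq_abs]
  have hb2 : b ^ 2 = p ^ 2 + q ^ 2 := by
    rw [hb, dist_eq_norm, ← hu, norm_sq, hp, hq]
  have ha2 : a ^ 2 = r ^ 2 + s ^ 2 := by
    rw [ha, dist_eq_norm, ← hv, norm_sq, hr, hs]
  have hc2 : c ^ 2 = (p - r) ^ 2 + (q - s) ^ 2 := by
    have hAB : A - B = u - v := by rw [hu, hv]; abel
    rw [hc, dist_eq_norm, hAB, norm_sq, hp, hq, hr, hs]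
    simp [PiLp.sub_apply]
  have han : 0 ≤ a := ha ▸ dist_nonneg
  have hbn : 0 ≤ b := hb ▸ dist_nonneg
  have hcn : 0 ≤ c := hc ▸ dist_nonneg
  obtain ⟨hA2, hB2, hC2⟩ := alg_key a b c p q r s hd2 hb2 ha2 hc2 h1 h2
  refine ⟨?_, ?_, ?_⟩
  · rw [show (2:ℝ) = a ^ 2 from hA2.symm, Real.sqrt_sq han]
  · rw [show (2:ℝ) = b ^ 2 from hB2.symm, Real.sqrt_sq hbn]
  · nlinarith
end

section
/- Among all triangles with sides a, b, c satisfying c² ≤ 4 and a² + b² ≤ 4, the area is at most 1, with equality only for the isosceles right triangle with legs √2 and hypotenuse 2. -/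
open Set MeasureTheory Real Pointwise


lemma tri_hull : convexHull ℝ {((0:ℝ),(0:ℝ)), (1,0), (0,1)} =
    {p : ℝ×ℝ | 0 ≤ p.1 ∧ 0 ≤ p.2 ∧ p.1 + p.2 ≤ 1} := by
  apply le_antisymm
  · apply convexHull_min
    · rintro p (rfl | rfl | rfl) <;> norm_num
    · rintro x ⟨hx1, hx2, hx3⟩ y ⟨hy1, hy2, hy3⟩ s t hs ht hst
      simp only [mem_setOf_eq, Prod.fst_add, Prod.snd_add, Prod.smul_fst, Prod.smul_snd,
        smul_eq_mul]
      refine ⟨by positivity, by positivity, by nlinarith⟩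
  · rintro ⟨p1, p2⟩ ⟨h1, h2, h3⟩
    have hc := convex_convexHull ℝ ({((0:ℝ),(0:ℝ)), (1,0), (0,1)} : Set (ℝ×ℝ))
    have h0 : ((0:ℝ),(0:ℝ)) ∈ convexHull ℝ ({((0:ℝ),(0:ℝ)), (1,0), (0,1)} : Set (ℝ×ℝ)) :=
      subset_convexHull _ _ (by norm_num)
    have hq : ((1:ℝ),(0:ℝ)) ∈ convexHull ℝ ({((0:ℝ),(0:ℝ)), (1,0), (0,1)} : Set (ℝ×ℝ)) :=
      subset_convexHull _ _ (by norm_num)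
    have hr : ((0:ℝ),(1:ℝ)) ∈ convexHull ℝ ({((0:ℝ),(0:ℝ)), (1,0), (0,1)} : Set (ℝ×ℝ)) :=
      subset_convexHull _ _ (by norm_num)
    by_cases ht : p1 + p2 = 0
    · have e1 : p1 = 0 := by linarith
      have e2 : p2 = 0 := by linarith
      rw [e1, e2]; exact h0
    · set t := p1 + p2 with htdef
      have ht0 : 0 < t := lt_of_le_of_ne (by linarith) (Ne.symm ht)
      have hinner : ((p1/t, p2/t) : ℝ×ℝ) ∈
          convexHull ℝ ({((0:ℝ),(0:ℝ)), (1,0), (0,1)} : Set (ℝ×ℝ)) := by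
        have := hc hq hr (by positivity : (0:ℝ) ≤ p1/t) (by positivity : (0:ℝ) ≤ p2/t)
          (by field_simp; rw [htdef])
        convert this using 1
        simp [Prod.ext_iff]
      have := hc h0 hinner (by linarith : (0:ℝ) ≤ 1 - t) (le_of_lt ht0) (by ring)
      convert this using 1
      simp only [Prod.ext_iff, Prod.fst_add, Prod.snd_add, Prod.smul_fst, Prod.smul_snd,
        smul_eq_mul]
      constructor <;> field_simp <;> ring


lemma tri_meas : MeasurableSet {p : ℝ×ℝ | 0 ≤ p.1 ∧ 0 ≤ p.2 ∧ p.1 + p.2 ≤ 1} := by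
  have : IsClosed {p : ℝ×ℝ | 0 ≤ p.1 ∧ 0 ≤ p.2 ∧ p.1 + p.2 ≤ 1} := by
    have h1 : IsClosed {p : ℝ×ℝ | 0 ≤ p.1} := isClosed_le continuous_const continuous_fst
    have h2 : IsClosed {p : ℝ×ℝ | 0 ≤ p.2} := isClosed_le continuous_const continuous_snd
    have h3 : IsClosed {p : ℝ×ℝ | p.1 + p.2 ≤ 1} :=
      isClosed_le (continuous_fst.add continuous_snd) continuous_const
    exact (h1.inter (h2.inter h3))
  exact this.measurableSet

lemma tri_vol : volume {p : ℝ×ℝ | 0 ≤ p.1 ∧ 0 ≤ p.2 ∧ p.1 + p.2 ≤ 1} =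
    ENNReal.ofReal (1/2) := by
  have hprod : (volume : Measure (ℝ×ℝ)) = (volume : Measure ℝ).prod volume := rfl
  rw [hprod, Measure.prod_apply tri_meas]
  have hslice : ∀ x : ℝ, (volume : Measure ℝ)
      (Prod.mk x ⁻¹' {p : ℝ×ℝ | 0 ≤ p.1 ∧ 0 ≤ p.2 ∧ p.1 + p.2 ≤ 1}) =
      (Icc (0:ℝ) 1).indicator (fun x => ENNReal.ofReal (1-x)) x := by
    intro x
    by_cases hx : 0 ≤ x
    · have hpre : Prod.mk x ⁻¹' {p : ℝ×ℝ | 0 ≤ p.1 ∧ 0 ≤ p.2 ∧ p.1 + p.2 ≤ 1}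
          = Icc 0 (1-x) := by
        ext y
        simp only [mem_preimage, mem_setOf_eq, mem_Icc]
        constructor
        · rintro ⟨_, hy, hxy⟩; exact ⟨hy, by linarith⟩
        · rintro ⟨hy, hxy⟩; exact ⟨hx, hy, by linarith⟩
      rw [hpre, Real.volume_Icc]
      by_cases hx1 : x ≤ 1
      · rw [indicator_of_mem (mem_Icc.mpr ⟨hx, hx1⟩)]; norm_num
      · rw [indicator_of_notMem (by simp [hx1])]
        rw [ENNReal.ofReal_eq_zero]; linarith
    · have hpre : Prod.mk x ⁻¹' {p : ℝ×ℝ | 0 ≤ p.1 ∧ 0 ≤ p.2 ∧ p.1 + p.2 ≤ 1}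
          = (∅ : Set ℝ) := by
        ext y; simp only [mem_preimage, mem_setOf_eq, mem_empty_iff_false, iff_false]
        rintro ⟨h, _, _⟩; exact hx h
      rw [hpre, indicator_of_notMem (by simp; intro h; linarith)]
      simp
  rw [lintegral_congr hslice, lintegral_indicator measurableSet_Icc]
  rw [← ofReal_integral_eq_lintegral_ofReal]
  · rw [integral_Icc_eq_integral_Ioc, ← intervalIntegral.integral_of_le zero_le_one]
    have hval : (∫ x in (0:ℝ)..1, (1 - x)) = 1/2 := by
      rw [intervalIntegral.integral_sub intervalIntegrable_const
        intervalIntegral.intervalIntegrable_id]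
      simp
      norm_num
    rw [hval]
  · exact (continuous_const.sub continuous_id).integrableOn_Icc.integrable
  · filter_upwards [self_mem_ae_restrict measurableSet_Icc] with x hx
    simp only [mem_Icc] at hx
    show (0:ℝ) ≤ 1 - x
    linarith [hx.2]


noncomputable def Lmap (u v : ℝ×ℝ) : (ℝ×ℝ) →ₗ[ℝ] (ℝ×ℝ) where
  toFun x := x.1 • u + x.2 • v
  map_add' x y := by simp [add_smul]; abel
  map_smul' c x := by simp [smul_smul]

lemma Lmap_det (u v : ℝ×ℝ) : LinearMap.det (Lmap u v) = u.1 * v.2 - u.2 * v.1 := by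
  rw [← LinearMap.det_toMatrix (Module.Basis.finTwoProd ℝ), Matrix.det_fin_two]
  simp [LinearMap.toMatrix_apply, Lmap, Module.Basis.finTwoProd]
  ring

lemma hull_vol (P Q R : ℝ×ℝ) : volume (convexHull ℝ {P, Q, R}) =
    ENNReal.ofReal (|(Q.1-P.1)*(R.2-P.2) - (Q.2-P.2)*(R.1-P.1)| / 2) := by
  set u := Q - P
  set v := R - P
  set f : (ℝ×ℝ) →ᵃ[ℝ] (ℝ×ℝ) := AffineMap.mk' (fun x => Lmap u v x + P) (Lmap u v) 0
    (fun p => by simp) with hf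
  have hfx : ∀ x, f x = Lmap u v x + P := fun x => rfl
  have himg : f '' {((0:ℝ),(0:ℝ)), (1,0), (0,1)} = {P, Q, R} := by
    rw [image_insert_eq, image_insert_eq, image_singleton]
    simp only [hfx, Lmap]
    simp [u, v]
  rw [← himg, ← AffineMap.image_convexHull]
  have : ⇑f '' (convexHull ℝ {((0:ℝ),(0:ℝ)), (1,0), (0,1)}) =
      (P +ᵥ (Lmap u v '' (convexHull ℝ {((0:ℝ),(0:ℝ)), (1,0), (0,1)})) : Set (ℝ×ℝ)) := by
    rw [← Set.image_vadd, Set.image_image]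
    simp only [hfx, vadd_eq_add]
    congr 1; funext x; ring
  rw [this, measure_vadd, Measure.addHaar_image_linearMap, Lmap_det, tri_hull, tri_vol]
  rw [← ENNReal.ofReal_mul (abs_nonneg _)]
  congr 1
  simp only [u, v, Prod.fst_sub, Prod.snd_sub]
  ring

lemma det_le (a b d ip : ℝ) (h1 : a^2 + b^2 ≤ 4) (hp : a^2*b^2 = d^2 + ip^2) : |d| ≤ 2 := by
  have hs16 : (a^2 + b^2)^2 ≤ 16 := by nlinarith [sq_nonneg a, sq_nonneg b]
  have hd2 : d ^ 2 ≤ 4 := by nlinarith [sq_nonneg ip, sq_nonneg (a^2 - b^2)]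
  rw [abs_le]
  constructor
  · nlinarith [sq_nonneg (d + 2)]
  · nlinarith [sq_nonneg (d - 2)]

lemma eq_case (a b c d ip : ℝ) (h1 : a^2 + b^2 ≤ 4) (hp : a^2*b^2 = d^2 + ip^2)
    (hcid : c^2 = a^2 + b^2 - 2*ip) (hd4 : d^2 = 4) (hc0 : 0 ≤ c) :
    a^2 = 2 ∧ b^2 = 2 ∧ c = 2 := by
  have hs16 : (a^2 + b^2)^2 ≤ 16 := by nlinarith [sq_nonneg a, sq_nonneg b]
  have hsq : (a^2 - b^2)^2 + 4 * ip^2 ≤ 0 := by nlinarith [sq_nonneg (a^2 + b^2)]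
  have ha2 : a^2 = 2 := by nlinarith [sq_nonneg (a^2 - b^2), sq_nonneg ip]
  have hb2 : b^2 = 2 := by nlinarith [sq_nonneg (a^2 - b^2), sq_nonneg ip]
  have hip : ip = 0 := by nlinarith [sq_nonneg (a^2 - b^2), sq_nonneg ip]
  refine ⟨ha2, hb2, ?_⟩
  have hc4 : c^2 = 4 := by rw [hcid, ha2, hb2, hip]; ring
  nlinarith [sq_nonneg (c - 2)]

noncomputable def emap : EuclideanSpace ℝ (Fin 2) →ₗ[ℝ] ℝ×ℝ where
  toFun x := (x 0, x 1)
  map_add' x y := by simp [Prod.ext_iff]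
  map_smul' c x := by simp [Prod.ext_iff]

lemma euclid_vol (s : Set (EuclideanSpace ℝ (Fin 2))) (hs : MeasurableSet s) :
    volume (⇑emap '' s) = volume s := by
  set e : EuclideanSpace ℝ (Fin 2) ≃ᵐ ℝ×ℝ :=
    (MeasurableEquiv.toLp 2 (Fin 2 → ℝ)).symm.trans MeasurableEquiv.finTwoArrow with he
  have hmp : MeasurePreserving e volume volume :=
    (volume_preserving_finTwoArrow ℝ).comp
      (EuclideanSpace.volume_preserving_symm_measurableEquiv_toLp (Fin 2))
  have himg : ⇑emap '' s = ⇑e.symm ⁻¹' s := by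
    rw [show ⇑emap = ⇑e.toEquiv from rfl, Equiv.image_eq_preimage_symm]
    rfl
  rw [himg]
  exact (hmp.symm e).measure_preimage hs.nullMeasurableSet

theorem stmt_1 (A B C : EuclideanSpace ℝ (Fin 2))
    (a b c : ℝ) (ha : a = dist B C) (hb : b = dist A C) (hc : c = dist A B)
    (h1 : a ^ 2 + b ^ 2 ≤ 4) (h2 : c ^ 2 ≤ 4) :
    volume (convexHull ℝ {A, B, C}) ≤ 1 ∧
      (volume (convexHull ℝ {A, B, C}) = 1 →
        a = Real.sqrt 2 ∧ b = Real.sqrt 2 ∧ c = 2) := by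
  have hmeas : MeasurableSet (convexHull ℝ ({A, B, C} : Set (EuclideanSpace ℝ (Fin 2)))) :=
    (((Set.finite_singleton C).insert B).insert A).isCompact_convexHull ℝ |>.isClosed.measurableSet
  have himg : ⇑emap '' (convexHull ℝ ({A, B, C} : Set (EuclideanSpace ℝ (Fin 2)))) =
      convexHull ℝ {(A 0, A 1), (B 0, B 1), (C 0, C 1)} := by
    rw [show ⇑emap = ⇑emap.toAffineMap from rfl, AffineMap.image_convexHull]
    congr 1
    rw [image_insert_eq, image_insert_eq, image_singleton]
    rfl
  set det : ℝ := (B 0 - A 0) * (C 1 - A 1) - (B 1 - A 1) * (C 0 - A 0) with hdet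
  have key : volume (convexHull ℝ ({A, B, C} : Set (EuclideanSpace ℝ (Fin 2)))) =
      ENNReal.ofReal (|det| / 2) := by
    rw [← euclid_vol _ hmeas, himg, hull_vol]
  -- coordinates of distances
  have ha2 : a ^ 2 = (B 0 - C 0) ^ 2 + (B 1 - C 1) ^ 2 := by
    rw [ha, EuclideanSpace.dist_eq, Fin.sum_univ_two,
      Real.sq_sqrt (by positivity), Real.dist_eq, Real.dist_eq, sq_abs, sq_abs]
  have hb2 : b ^ 2 = (A 0 - C 0) ^ 2 + (A 1 - C 1) ^ 2 := by
    rw [hb, EuclideanSpace.dist_eq, Fin.sum_univ_two,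
      Real.sq_sqrt (by positivity), Real.dist_eq, Real.dist_eq, sq_abs, sq_abs]
  have hc2 : c ^ 2 = (A 0 - B 0) ^ 2 + (A 1 - B 1) ^ 2 := by
    rw [hc, EuclideanSpace.dist_eq, Fin.sum_univ_two,
      Real.sq_sqrt (by positivity), Real.dist_eq, Real.dist_eq, sq_abs, sq_abs]
  set ip : ℝ := (A 0 - C 0) * (B 0 - C 0) + (A 1 - C 1) * (B 1 - C 1) with hip
  have hprodid : a ^ 2 * b ^ 2 = det ^ 2 + ip ^ 2 := by rw [ha2, hb2]; ring
  have hcid : c ^ 2 = a ^ 2 + b ^ 2 - 2 * ip := by rw [ha2, hb2, hc2]; ring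
  have ha0 : 0 ≤ a := ha ▸ dist_nonneg
  have hb0 : 0 ≤ b := hb ▸ dist_nonneg
  have hc0 : 0 ≤ c := hc ▸ dist_nonneg
  constructor
  · rw [key, ENNReal.ofReal_le_one, div_le_one (by norm_num : (0:ℝ) < 2)]
    exact det_le a b det ip h1 hprodid
  · intro hv
    rw [key, ENNReal.ofReal_eq_one] at hv
    have hD : |det| = 2 := by linarith
    have hdet4 : det ^ 2 = 4 := by rw [← sq_abs, hD]; norm_num
    obtain ⟨ha2e, hb2e, hce⟩ := eq_case a b c det ip h1 hprodid hcid hdet4 hc0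
    refine ⟨?_, ?_, hce⟩
    · rw [show (2:ℝ) = a ^ 2 from ha2e.symm, Real.sqrt_sq ha0]
    · rw [show (2:ℝ) = b ^ 2 from hb2e.symm, Real.sqrt_sq hb0]
end

section
/- Suppose p : [a, b] → ℝ² is a curve with locality at most 4, i.e., |p(t) - p(t')|² ≤ 4|t - t'| for all t, t' ∈ [a, b]. If p passes through all three vertices A, B, C of an isosceles right triangle whose area equals b - a (with right angle at C), then p maps the endpoints a and b to the acute vertices A and B (in some order), and p maps the midpoint (a + b)/2 to the right-angle vertex C. -/
open Set

theorem stmt_5 (a b : ℝ) (hab : a < b) (p : ℝ → EuclideanSpace ℝ (Fin 2))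
    (hloc : ∀ t₁ ∈ Icc a b, ∀ t₂ ∈ Icc a b, t₁ ≤ t₂ →
      dist (p t₁) (p t₂) ^ 2 ≤ 4 * (t₂ - t₁))
    (A B C : EuclideanSpace ℝ (Fin 2))
    -- isosceles right triangle with right angle at C and area b - a
    (hiso : dist A C = dist B C)
    (hleg : dist A C = Real.sqrt (2 * (b - a)))
    (hhyp : dist A B = 2 * Real.sqrt (b - a))
    (tA tB tC : ℝ) (htA : tA ∈ Icc a b) (htB : tB ∈ Icc a b) (htC : tC ∈ Icc a b)
    (hpA : p tA = A) (hpB : p tB = B) (hpC : p tC = C) :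
    ((tA = a ∧ tB = b) ∨ (tA = b ∧ tB = a)) ∧ tC = (a + b) / 2 := by
  have hba : (0:ℝ) ≤ b - a := by linarith
  have hAB2 : dist A B ^ 2 = 4 * (b - a) := by
    rw [hhyp, mul_pow, Real.sq_sqrt hba]; ring
  have hAC2 : dist A C ^ 2 = 2 * (b - a) := by
    rw [hleg, Real.sq_sqrt (by linarith)]
  have hBC2 : dist B C ^ 2 = 2 * (b - a) := by rw [← hiso]; exact hAC2
  have key : ∀ t₁ ∈ Icc a b, ∀ t₂ ∈ Icc a b, dist (p t₁) (p t₂) ^ 2 ≤ 4 * |t₂ - t₁| := by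
    intro t₁ h₁ t₂ h₂
    rcases le_total t₁ t₂ with h | h
    · rw [abs_of_nonneg (by linarith)]; exact hloc t₁ h₁ t₂ h₂ h
    · rw [abs_of_nonpos (by linarith), dist_comm]
      have := hloc t₂ h₂ t₁ h₁ h; linarith
  have hAB := key tA htA tB htB
  rw [hpA, hpB, hAB2] at hAB
  have hACk := key tA htA tC htC
  rw [hpA, hpC, hAC2] at hACk
  have hBCk := key tB htB tC htC
  rw [hpB, hpC, hBC2] at hBCk
  obtain ⟨hA1, hA2⟩ := htA
  obtain ⟨hB1, hB2⟩ := htB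
  obtain ⟨hC1, hC2⟩ := htC
  rcases le_total tA tB with h | h
  · rw [abs_of_nonneg (by linarith)] at hAB
    have ha : tA = a := by linarith
    have hb : tB = b := by linarith
    subst ha; subst hb
    refine ⟨Or.inl ⟨rfl, rfl⟩, ?_⟩
    rw [abs_of_nonneg (by linarith)] at hACk
    rw [abs_of_nonpos (by linarith)] at hBCk
    linarith
  · rw [abs_of_nonpos (by linarith)] at hAB
    have ha : tB = a := by linarith
    have hb : tA = b := by linarith
    subst ha; subst hb
    refine ⟨Or.inr ⟨rfl, rfl⟩, ?_⟩
    rw [abs_of_nonpos (by linarith)] at hACk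
    rw [abs_of_nonneg (by linarith)] at hBCk
    linarith
end

section
/- If a continuous surjection p : [0, 1] → T onto a triangle T of unit area satisfies |p(t₂) - p(t₁)|² ≤ 4(t₂ - t₁) for all t₁ ≤ t₂, then T is an isosceles right triangle with legs √2 and hypotenuse 2. -/
open Set MeasureTheory

noncomputable abbrev E2 := EuclideanSpace ℝ (Fin 2)

lemma volR2 : volume {q : ℝ × ℝ | 0 ≤ q.1 ∧ 0 ≤ q.2 ∧ q.1 + q.2 ≤ 1} = ENNReal.ofReal (1/2) := by
  have hm : MeasurableSet {q : ℝ × ℝ | 0 ≤ q.1 ∧ 0 ≤ q.2 ∧ q.1 + q.2 ≤ 1} := by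
    apply MeasurableSet.inter
    · exact measurableSet_le measurable_const measurable_fst
    apply MeasurableSet.inter
    · exact measurableSet_le measurable_const measurable_snd
    · exact measurableSet_le (measurable_fst.add measurable_snd) measurable_const
  rw [Measure.volume_eq_prod, Measure.prod_apply hm]
  have hslice : (fun x : ℝ => volume (Prod.mk x ⁻¹' {q : ℝ × ℝ | 0 ≤ q.1 ∧ 0 ≤ q.2 ∧ q.1 + q.2 ≤ 1}))
      = (Icc (0:ℝ) 1).indicator (fun x => ENNReal.ofReal (1 - x)) := by
    funext x
    by_cases hx : x ∈ Icc (0:ℝ) 1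
    · have : Prod.mk x ⁻¹' {q : ℝ × ℝ | 0 ≤ q.1 ∧ 0 ≤ q.2 ∧ q.1 + q.2 ≤ 1} = Icc 0 (1 - x) := by
        ext y; simp only [mem_preimage, mem_setOf_eq, mem_Icc]
        constructor
        · rintro ⟨_, h2, h3⟩; exact ⟨h2, by linarith⟩
        · rintro ⟨h2, h3⟩; exact ⟨hx.1, h2, by linarith⟩
      rw [this, Real.volume_Icc, indicator_of_mem hx]; norm_num
    · have : Prod.mk x ⁻¹' {q : ℝ × ℝ | 0 ≤ q.1 ∧ 0 ≤ q.2 ∧ q.1 + q.2 ≤ 1} = ∅ := by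
        ext y; simp only [mem_preimage, mem_setOf_eq, mem_empty_iff_false, iff_false]
        rintro ⟨h1, h2, h3⟩
        simp only [mem_Icc, not_and_or, not_le] at hx
        rcases hx with hx | hx
        · linarith
        · linarith
      rw [this, measure_empty, indicator_of_notMem hx]
  rw [hslice]
  rw [show lintegral volume ((Icc (0:ℝ) 1).indicator fun x => ENNReal.ofReal (1 - x))
      = ∫⁻ x, (Icc (0:ℝ) 1).indicator (fun x => ENNReal.ofReal (1 - x)) x ∂volume from rfl]
  rw [lintegral_indicator measurableSet_Icc _]
  rw [← ofReal_integral_eq_lintegral_ofReal]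
  · norm_num
    rw [MeasureTheory.integral_Icc_eq_integral_Ioc, ← intervalIntegral.integral_of_le zero_le_one]
    rw [intervalIntegral.integral_sub intervalIntegrable_const intervalIntegral.intervalIntegrable_id,
      integral_id, intervalIntegral.integral_const]
    norm_num
  · exact (continuous_const.sub continuous_id).integrableOn_Icc
  · filter_upwards [ae_restrict_mem measurableSet_Icc] with x hx
    simp only [mem_Icc] at hx; simp only [Pi.zero_apply]; linarith [hx.2]



def S0 : Set E2 := {x | 0 ≤ x 0 ∧ 0 ≤ x 1 ∧ x 0 + x 1 ≤ 1}

lemma volS0 : volume S0 = ENNReal.ofReal (1/2) := by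
  have h1 := (MeasureTheory.volume_preserving_piFinTwo (fun _ : Fin 2 => ℝ)).comp
    (EuclideanSpace.volume_preserving_symm_measurableEquiv_toLp (Fin 2))
  have hm : MeasurableSet {q : ℝ × ℝ | 0 ≤ q.1 ∧ 0 ≤ q.2 ∧ q.1 + q.2 ≤ 1} := by
    apply MeasurableSet.inter
    · exact measurableSet_le measurable_const measurable_fst
    apply MeasurableSet.inter
    · exact measurableSet_le measurable_const measurable_snd
    · exact measurableSet_le (measurable_fst.add measurable_snd) measurable_const
  have hpre : S0 = ((MeasurableEquiv.piFinTwo fun _ : Fin 2 => ℝ) ∘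
      (MeasurableEquiv.toLp 2 (Fin 2 → ℝ)).symm) ⁻¹' {q : ℝ × ℝ | 0 ≤ q.1 ∧ 0 ≤ q.2 ∧ q.1 + q.2 ≤ 1} := rfl
  rw [hpre, h1.measure_preimage hm.nullMeasurableSet, volR2]

lemma hull_eq_S0 : convexHull ℝ ({0, EuclideanSpace.single 0 (1:ℝ),
    EuclideanSpace.single 1 (1:ℝ)} : Set E2) = S0 := by
  set e0 : E2 := EuclideanSpace.single 0 (1:ℝ)
  set e1 : E2 := EuclideanSpace.single 1 (1:ℝ)
  have he0 : e0 0 = 1 ∧ e0 1 = 0 := by constructor <;> simp [e0, EuclideanSpace.single_apply]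
  have he1 : e1 0 = 0 ∧ e1 1 = 1 := by constructor <;> simp [e1, EuclideanSpace.single_apply]
  apply Subset.antisymm
  · apply convexHull_min
    · rintro x (rfl | rfl | rfl) <;>
        simp [S0, he0.1, he0.2, he1.1, he1.2]
    · rintro x ⟨hx0, hx1, hxs⟩ y ⟨hy0, hy1, hys⟩ a b ha hb hab
      refine ⟨?_, ?_, ?_⟩ <;>
        simp only [S0, mem_setOf_eq, PiLp.add_apply, PiLp.smul_apply, smul_eq_mul] <;> nlinarith
  · rintro x ⟨hx0, hx1, hxs⟩
    rw [convexHull_insert (by simp), convexHull_pair, mem_convexJoin]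
    rcases eq_or_lt_of_le (by linarith : (0:ℝ) ≤ x 0 + x 1) with hs | hs
    · refine ⟨0, rfl, e0, left_mem_segment ℝ e0 e1, ?_⟩
      have h0 : x 0 = 0 := by linarith
      have h1 : x 1 = 0 := by linarith
      refine ⟨1, 0, zero_le_one, le_refl 0, by norm_num, ?_⟩
      ext i; fin_cases i <;> simp [h0, h1]
    · set s := x 0 + x 1 with hsdef
      refine ⟨0, rfl, (x 0 / s) • e0 + (x 1 / s) • e1, ?_, ?_⟩
      · exact ⟨x 0 / s, x 1 / s, by positivity, by positivity,
          by field_simp; exact hsdef.symm, rfl⟩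
      · refine ⟨1 - s, s, by linarith, le_of_lt hs, by ring, ?_⟩
        ext i
        fin_cases i <;>
          simp only [PiLp.add_apply, PiLp.smul_apply, smul_eq_mul, he0.1, he0.2, he1.1, he1.2] <;>
          · show (1 - s) * 0 + _ = _
            field_simp
            simp [e0, e1, EuclideanSpace.single_apply]


lemma vol_tri (X Y Z : E2) :
    volume (convexHull ℝ ({X, Y, Z} : Set E2)) =
      ENNReal.ofReal (|(Y - X) 0 * (Z - X) 1 - (Y - X) 1 * (Z - X) 0| / 2) := by
  set u : E2 := Y - X with hu
  set v : E2 := Z - X with hv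
  set L : E2 →ₗ[ℝ] E2 :=
    { toFun := fun w => w 0 • u + w 1 • v
      map_add' := by
        intro a b
        simp only [PiLp.add_apply, add_smul]
        module
      map_smul' := by
        intro c a
        simp only [PiLp.smul_apply, smul_eq_mul, RingHom.id_apply, smul_add, smul_smul] } with hL
  have hLe0 : L (EuclideanSpace.single 0 (1:ℝ)) = u := by
    show (EuclideanSpace.single 0 (1:ℝ) : E2) 0 • u + (EuclideanSpace.single 0 (1:ℝ) : E2) 1 • v = u
    simp [EuclideanSpace.single_apply]
  have hLe1 : L (EuclideanSpace.single 1 (1:ℝ)) = v := by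
    show (EuclideanSpace.single 1 (1:ℝ) : E2) 0 • u + (EuclideanSpace.single 1 (1:ℝ) : E2) 1 • v = v
    simp [EuclideanSpace.single_apply]
  have hL0 : L 0 = 0 := map_zero L
  have hdet : LinearMap.det L = u 0 * v 1 - u 1 * v 0 := by
    rw [← LinearMap.det_toMatrix (PiLp.basisFun 2 ℝ (Fin 2)), Matrix.det_fin_two]
    simp only [LinearMap.toMatrix_apply, PiLp.basisFun_repr, PiLp.basisFun_apply]
    rw [hLe0, hLe1]; ring
  have himg : convexHull ℝ ({X, Y, Z} : Set E2) = (fun w => X + w) '' (L '' S0) := by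
    rw [← hull_eq_S0, L.image_convexHull]
    rw [show (fun w => X + w) '' (convexHull ℝ (⇑L '' {0, EuclideanSpace.single 0 (1:ℝ),
        EuclideanSpace.single 1 (1:ℝ)}))
      = (AffineEquiv.constVAdd ℝ E2 X).toAffineMap '' (convexHull ℝ (⇑L '' {0,
        EuclideanSpace.single 0 (1:ℝ), EuclideanSpace.single 1 (1:ℝ)})) from rfl]
    rw [AffineMap.image_convexHull]
    congr 1
    simp only [image_insert_eq, image_singleton, hL0, hLe0, hLe1]
    have h1 : (AffineEquiv.constVAdd ℝ E2 X).toAffineMap 0 = X := by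
      simp [AffineEquiv.constVAdd_apply]
    have h2 : (AffineEquiv.constVAdd ℝ E2 X).toAffineMap u = Y := by
      simp [AffineEquiv.constVAdd_apply, hu, vadd_eq_add]
    have h3 : (AffineEquiv.constVAdd ℝ E2 X).toAffineMap v = Z := by
      simp [AffineEquiv.constVAdd_apply, hv, vadd_eq_add]
    rw [h1, h2, h3]
  rw [himg, Set.image_add_left, measure_preimage_add]
  rw [Measure.addHaar_image_linearMap, volS0, hdet]
  rw [← ENNReal.ofReal_mul (abs_nonneg _)]
  congr 1
  ring


lemma alg (p q r s : ℝ) (hd : (p*s - q*r)^2 = 4) (hle : (p^2+q^2) + (r^2+s^2) ≤ 4) :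
    p^2+q^2 = 2 ∧ r^2+s^2 = 2 ∧ (p+r)^2 + (q+s)^2 = 4 := by
  have lagrange : (p*s - q*r)^2 + (p*r+q*s)^2 = (p^2+q^2)*(r^2+s^2) := by ring
  have h1 : (p^2+q^2) * (r^2+s^2) = 4 := by nlinarith [sq_nonneg (p*r+q*s), sq_nonneg (p^2+q^2 - (r^2+s^2)), sq_nonneg (p^2+q^2+(r^2+s^2))]
  have h2 : p^2+q^2 = 2 := by nlinarith [sq_nonneg (p^2+q^2 - (r^2+s^2)), sq_nonneg p, sq_nonneg q, sq_nonneg r, sq_nonneg s]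
  have h3 : r^2+s^2 = 2 := by nlinarith
  have h4 : p*r + q*s = 0 := by nlinarith
  exact ⟨h2, h3, by nlinarith⟩

lemma dist_sq (X Y : E2) : dist X Y ^ 2 = (Y 0 - X 0)^2 + (Y 1 - X 1)^2 := by
  rw [EuclideanSpace.dist_eq, Real.sq_sqrt (by positivity)]
  simp [Fin.sum_univ_two, Real.dist_eq, sq_abs]
  ring

lemma key (X Y Z : E2) (hvol : volume (convexHull ℝ ({X, Y, Z} : Set E2)) = 1)
    (hle : dist X Y ^ 2 + dist Y Z ^ 2 ≤ 4) :
    dist X Y = Real.sqrt 2 ∧ dist Y Z = Real.sqrt 2 ∧ dist X Z = 2 := by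
  rw [vol_tri] at hvol
  set d : ℝ := (Y - X) 0 * (Z - X) 1 - (Y - X) 1 * (Z - X) 0 with hd
  have habs : |d| / 2 = 1 := by
    rw [show (1 : ENNReal) = ENNReal.ofReal 1 by simp] at hvol
    rwa [ENNReal.ofReal_eq_ofReal_iff (by positivity) zero_le_one] at hvol
  have hd2 : d ^ 2 = 4 := by
    have : |d| = 2 := by linarith
    nlinarith [sq_abs d, this]
  set p := Y 0 - X 0
  set q := Y 1 - X 1
  set r := Z 0 - Y 0
  set s := Z 1 - Y 1
  have hdpq : d = p * s - q * r := by
    simp only [hd, PiLp.sub_apply, p, q, r, s]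
    ring
  have h1 : dist X Y ^ 2 = p^2 + q^2 := by rw [dist_sq]
  have h2 : dist Y Z ^ 2 = r^2 + s^2 := by rw [dist_sq]
  have h3 : dist X Z ^ 2 = (p+r)^2 + (q+s)^2 := by rw [dist_sq]; simp only [p,q,r,s]; ring
  obtain ⟨e1, e2, e3⟩ := alg p q r s (by rw [← hdpq]; exact hd2) (by rw [← h1, ← h2]; exact hle)
  refine ⟨?_, ?_, ?_⟩
  · rw [show Real.sqrt 2 = Real.sqrt (dist X Y ^ 2) by rw [h1, e1], Real.sqrt_sq dist_nonneg]
  · rw [show Real.sqrt 2 = Real.sqrt (dist Y Z ^ 2) by rw [h2, e2], Real.sqrt_sq dist_nonneg]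
  · have : dist X Z ^ 2 = 2 ^ 2 := by rw [h3, e3]; norm_num
    have h4 := dist_nonneg (x := X) (y := Z)
    nlinarith


lemma mswap (a b c : ℝ) : ({a, b, c} : Multiset ℝ) = {b, a, c} := Multiset.cons_swap a b {c}
lemma mrot (a b c : ℝ) : ({a, b, c} : Multiset ℝ) = {b, c, a} := by
  rw [mswap]; congr 1; exact Multiset.cons_swap a c 0
lemma mswap23 (a b c : ℝ) : ({a, b, c} : Multiset ℝ) = {a, c, b} := by
  congr 1; exact Multiset.cons_swap b c 0

theorem stmt_7 (A B C : EuclideanSpace ℝ (Fin 2))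
    (T : Set (EuclideanSpace ℝ (Fin 2))) (hT : T = convexHull ℝ {A, B, C})
    (harea : volume T = 1)
    (p : ℝ → EuclideanSpace ℝ (Fin 2))
    (hcont : ContinuousOn p (Icc 0 1))
    (hsurj : p '' Icc 0 1 = T)
    (hloc : ∀ t₁ ∈ Icc (0:ℝ) 1, ∀ t₂ ∈ Icc (0:ℝ) 1, t₁ ≤ t₂ →
      dist (p t₁) (p t₂) ^ 2 ≤ 4 * (t₂ - t₁)) :
    ({dist A B, dist A C, dist B C} : Multiset ℝ) = {Real.sqrt 2, Real.sqrt 2, 2} := by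
  have hmem : ∀ V ∈ ({A, B, C} : Set (EuclideanSpace ℝ (Fin 2))),
      ∃ t ∈ Icc (0:ℝ) 1, p t = V := by
    intro V hV
    have : V ∈ T := hT ▸ subset_convexHull ℝ _ hV
    rw [← hsurj] at this
    obtain ⟨t, ht, hpt⟩ := this
    exact ⟨t, ht, hpt⟩
  obtain ⟨ta, hta, hpa⟩ := hmem A (by simp)
  obtain ⟨tb, htb, hpb⟩ := hmem B (by simp)
  obtain ⟨tc, htc, hpc⟩ := hmem C (by simp)
  -- general: for times t1 ≤ t2 ≤ t3 hitting X, Y, Z we get the bound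
  have main : ∀ (X Y Z : EuclideanSpace ℝ (Fin 2)) (t1 t2 t3 : ℝ),
      t1 ∈ Icc (0:ℝ) 1 → t2 ∈ Icc (0:ℝ) 1 → t3 ∈ Icc (0:ℝ) 1 →
      t1 ≤ t2 → t2 ≤ t3 → p t1 = X → p t2 = Y → p t3 = Z →
      ({X, Y, Z} : Set (EuclideanSpace ℝ (Fin 2))) = {A, B, C} →
      dist X Y = Real.sqrt 2 ∧ dist Y Z = Real.sqrt 2 ∧ dist X Z = 2 := by
    intro X Y Z t1 t2 t3 h1 h2 h3 h12 h23 e1 e2 e3 hset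
    apply key
    · rw [hset, ← hT]; exact harea
    · have b1 := hloc t1 h1 t2 h2 h12
      have b2 := hloc t2 h2 t3 h3 h23
      rw [e1, e2] at b1
      rw [e2, e3] at b2
      have := h1.1
      have := h3.2
      linarith
  have hperm : ∀ X Y Z : EuclideanSpace ℝ (Fin 2),
      ({X, Y, Z} : Set (EuclideanSpace ℝ (Fin 2))) = {Y, X, Z} ∧
      ({X, Y, Z} : Set (EuclideanSpace ℝ (Fin 2))) = {X, Z, Y} := by
    intro X Y Z
    constructor <;> · ext x; simp; tauto
  rcases le_total ta tb with hab | hab <;> rcases le_total tb tc with hbc | hbc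
  · -- ta ≤ tb ≤ tc : order A B C
    obtain ⟨d1, d2, d3⟩ := main A B C ta tb tc hta htb htc hab hbc hpa hpb hpc rfl
    rw [d1, d2, d3, mswap23]
  · rcases le_total ta tc with hac | hac
    · -- ta ≤ tc ≤ tb : order A C B
      obtain ⟨d1, d2, d3⟩ := main A C B ta tc tb hta htc htb hac hbc hpa hpc hpb
        ((hperm A B C).2.symm)
      rw [dist_comm C B] at d2
      rw [d1, d2, d3, mrot]
    · -- tc ≤ ta ≤ tb : order C A B
      obtain ⟨d1, d2, d3⟩ := main C A B tc ta tb htc hta htb hac hab hpc hpa hpb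
        (by ext x; simp; tauto)
      rw [dist_comm C A] at d1
      rw [dist_comm C B] at d3
      rw [d1, d2, d3]
  · rcases le_total ta tc with hac | hac
    · -- tb ≤ ta ≤ tc : order B A C
      obtain ⟨d1, d2, d3⟩ := main B A C tb ta tc htb hta htc hab hac hpb hpa hpc
        ((hperm A B C).1.symm)
      rw [dist_comm B A] at d1
      rw [d1, d2, d3]
    · -- tb ≤ tc ≤ ta : order B C A
      obtain ⟨d1, d2, d3⟩ := main B C A tb tc ta htb htc hta hbc hac hpb hpc hpa
        (by ext x; simp; tauto)
      rw [dist_comm C A] at d2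
      rw [dist_comm B A] at d3
      rw [d2, d3, d1]
      exact mrot _ _ _
  · -- tc ≤ tb ≤ ta : order C B A
    obtain ⟨d1, d2, d3⟩ := main C B A tc tb ta htc htb hta hbc hab hpc hpb hpa
      (by ext x; simp; tauto)
    rw [dist_comm C B] at d1
    rw [dist_comm B A] at d2
    rw [dist_comm C A] at d3
    rw [d1, d2, d3, mswap23]
end

section
/- Let p : [0,1] → ℝ² satisfy |p(t₂) - p(t₁)|² ≤ 4(t₂ - t₁) for all t₁ ≤ t₂, and suppose t₁ < t₂ < t₃ with |p(t₁) - p(t₃)|² = 4(t₃ - t₁) and p(t₂) equidistant from p(t₁) and p(t₃) with the angle at p(t₂) being right. Then |p(t₁) - p(t₂)|² = 4(t₂ - t₁) and |p(t₂) - p(t₃)|² = 4(t₃ - t₂). -/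
open Set

theorem stmt_8 (p : ℝ → EuclideanSpace ℝ (Fin 2))
    (hloc : ∀ t₁ ∈ Icc (0:ℝ) 1, ∀ t₂ ∈ Icc (0:ℝ) 1, t₁ ≤ t₂ →
      dist (p t₁) (p t₂) ^ 2 ≤ 4 * (t₂ - t₁))
    (t₁ t₂ t₃ : ℝ) (ht₁ : t₁ ∈ Icc (0:ℝ) 1) (ht₂ : t₂ ∈ Icc (0:ℝ) 1)
    (ht₃ : t₃ ∈ Icc (0:ℝ) 1) (h12 : t₁ < t₂) (h23 : t₂ < t₃)
    (hmax : dist (p t₁) (p t₃) ^ 2 = 4 * (t₃ - t₁))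
    (hequi : dist (p t₁) (p t₂) = dist (p t₂) (p t₃))
    (hright : dist (p t₁) (p t₂) ^ 2 + dist (p t₂) (p t₃) ^ 2
      = dist (p t₁) (p t₃) ^ 2) :
    dist (p t₁) (p t₂) ^ 2 = 4 * (t₂ - t₁) ∧
      dist (p t₂) (p t₃) ^ 2 = 4 * (t₃ - t₂) := by
  have h1 := hloc t₁ ht₁ t₂ ht₂ h12.le
  have h2 := hloc t₂ ht₂ t₃ ht₃ h23.le
  rw [hequi] at h1 hright ⊢
  constructor <;> linarith
end

section
/- Let p : [a,b] → ℝ² be a curve satisfying |p(t) - p(t')|² ≤ 4|t - t'| for all t, t' ∈ [a,b], and suppose that |p(a) - p(b)|² = 4(b - a). Then for every t ∈ [a,b], p(t) lies in the closed disk with diameter segment [p(a), p(b)], i.e., |p(t) - m| ≤ |p(a) - p(b)|/2 where m = (p(a) + p(b))/2. -/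
open Set

theorem stmt_9 (a b : ℝ) (hab : a ≤ b) (p : ℝ → EuclideanSpace ℝ (Fin 2))
    (hloc : ∀ t₁ ∈ Icc a b, ∀ t₂ ∈ Icc a b, t₁ ≤ t₂ →
      dist (p t₁) (p t₂) ^ 2 ≤ 4 * (t₂ - t₁))
    (hmax : dist (p a) (p b) ^ 2 = 4 * (b - a)) :
    ∀ t ∈ Icc a b, dist (p t) (midpoint ℝ (p a) (p b)) ≤ dist (p a) (p b) / 2 := by
  intro t ht
  obtain ⟨hta, htb⟩ := ht
  have ha : a ∈ Icc a b := ⟨le_refl a, hab⟩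
  have hb : b ∈ Icc a b := ⟨hab, le_refl b⟩
  have ht' : t ∈ Icc a b := ⟨hta, htb⟩
  have h1 : dist (p a) (p t) ^ 2 ≤ 4 * (t - a) := hloc a ha t ht' hta
  have h2 : dist (p t) (p b) ^ 2 ≤ 4 * (b - t) := hloc t ht' b hb htb
  set x : EuclideanSpace ℝ (Fin 2) := p t - p a
  set y : EuclideanSpace ℝ (Fin 2) := p t - p b
  have hpar : ‖x + y‖ * ‖x + y‖ + ‖x - y‖ * ‖x - y‖ = 2 * (‖x‖ * ‖x‖ + ‖y‖ * ‖y‖) :=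
    by have h := parallelogram_law_with_norm ℝ x y; simp only [pow_two] at h; exact h
  have hxy : x - y = p b - p a := by simp [x, y]
  have hmid : p t - midpoint ℝ (p a) (p b) = (2⁻¹ : ℝ) • (x + y) := by
    rw [midpoint_eq_smul_add]
    simp [x, y]
    module
  have hdm : dist (p t) (midpoint ℝ (p a) (p b)) = ‖x + y‖ / 2 := by
    rw [dist_eq_norm, hmid, norm_smul]
    simp [norm_inv]
    ring
  have hdx : dist (p a) (p t) = ‖x‖ := by rw [dist_eq_norm, ← norm_neg]; simp [x]
  have hdy : dist (p t) (p b) = ‖y‖ := by rw [dist_eq_norm]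
  have hdab : dist (p a) (p b) = ‖x - y‖ := by rw [hxy, dist_eq_norm, ← norm_neg]; simp
  have key : ‖x + y‖ ^ 2 ≤ ‖x - y‖ ^ 2 := by
    have : ‖x‖ ^ 2 + ‖y‖ ^ 2 ≤ 4 * (b - a) := by
      rw [← hdx, ← hdy]; nlinarith
    have hd2 : ‖x - y‖ ^ 2 = 4 * (b - a) := by rw [← hdab]; exact hmax
    nlinarith [hpar, hd2, this, sq_nonneg (‖x+y‖)]
  rw [hdm, hdab]
  have : ‖x + y‖ ≤ ‖x - y‖ := by
    nlinarith [norm_nonneg (x + y), norm_nonneg (x - y)]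
  linarith
end

section
/- The Sierpiński–Knopp curve s : [0,1] → ℝ² satisfies |s(t₂) - s(t₁)|² ≤ 4(t₂ - t₁) for all 0 ≤ t₁ ≤ t₂ ≤ 1, and this constant 4 is attained, i.e., there exist t₁ < t₂ with |s(t₂) - s(t₁)|² = 4(t₂ - t₁). -/
open Set MeasureTheory

noncomputable def pt (x y : ℝ) : EuclideanSpace ℝ (Fin 2) := WithLp.toLp 2 ![x, y]

/-- The Sierpiński–Knopp curve: a continuous surjection of `[0,1]` onto the isosceles
right triangle with vertices `(0,0)`, `(2,0)`, `(1,1)`, whose two halves are images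
of the whole curve under similarities with ratio `1/√2`, mapping onto the two half
triangles. -/
def IsSierpinskiKnopp (s : ℝ → EuclideanSpace ℝ (Fin 2)) : Prop :=
  ContinuousOn s (Icc 0 1) ∧
  s '' Icc 0 1 = convexHull ℝ {pt 0 0, pt 2 0, pt 1 1} ∧
  s '' Icc 0 (1/2) = convexHull ℝ {pt 0 0, pt 1 0, pt 1 1} ∧
  s '' Icc (1/2) 1 = convexHull ℝ {pt 1 0, pt 1 1, pt 2 0} ∧
  s 0 = pt 0 0 ∧ s (1/2) = pt 1 1 ∧ s 1 = pt 2 0 ∧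
  ∃ f₀ f₁ : EuclideanSpace ℝ (Fin 2) → EuclideanSpace ℝ (Fin 2),
    (∀ x y, dist (f₀ x) (f₀ y) = dist x y / Real.sqrt 2) ∧
    (∀ x y, dist (f₁ x) (f₁ y) = dist x y / Real.sqrt 2) ∧
    (∀ t ∈ Icc (0:ℝ) 1, s (t / 2) = f₀ (s t)) ∧
    (∀ t ∈ Icc (0:ℝ) 1, s ((t + 1) / 2) = f₁ (s t))

lemma SK_distsq (p q : EuclideanSpace ℝ (Fin 2)) :
    dist p q ^ 2 = (p 0 - q 0)^2 + (p 1 - q 1)^2 := by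
  rw [EuclideanSpace.dist_eq, Real.sq_sqrt (by positivity)]
  simp [Fin.sum_univ_two, Real.dist_eq, sq_abs]

/-- membership in a triangle described by three affine inequalities -/
lemma SK_hull_sub (a b c : ℝ × ℝ ) (u v w : ℝ × ℝ) (r₁ r₂ r₃ : ℝ)
    (h : ∀ z : ℝ × ℝ, z ∈ ({a, b, c} : Set (ℝ × ℝ)) →
      u.1 * z.1 + u.2 * z.2 ≤ r₁ ∧ v.1 * z.1 + v.2 * z.2 ≤ r₂ ∧ w.1 * z.1 + w.2 * z.2 ≤ r₃) :
    convexHull ℝ {pt a.1 a.2, pt b.1 b.2, pt c.1 c.2} ⊆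
      {p : EuclideanSpace ℝ (Fin 2) |
        u.1 * p 0 + u.2 * p 1 ≤ r₁ ∧ v.1 * p 0 + v.2 * p 1 ≤ r₂ ∧ w.1 * p 0 + w.2 * p 1 ≤ r₃} := by
  apply convexHull_min
  · rintro z (rfl | rfl | rfl)
    · simpa [pt] using h a (by simp)
    · simpa [pt] using h b (by simp)
    · simpa [pt] using h c (by simp)
  · intro x hx y hy α β hα hβ hαβ
    simp only [mem_setOf_eq] at hx hy ⊢
    have e0 : (α • x + β • y) 0 = α * x 0 + β * y 0 := rfl
    have e1 : (α • x + β • y) 1 = α * x 1 + β * y 1 := rfl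
    rw [e0, e1]
    have hr1 : α * r₁ + β * r₁ = r₁ := by rw [← add_mul, hαβ, one_mul]
    have hr2 : α * r₂ + β * r₂ = r₂ := by rw [← add_mul, hαβ, one_mul]
    have hr3 : α * r₃ + β * r₃ = r₃ := by rw [← add_mul, hαβ, one_mul]
    refine ⟨?_, ?_, ?_⟩
    · nlinarith [mul_le_mul_of_nonneg_left hx.1 hα, mul_le_mul_of_nonneg_left hy.1 hβ]
    · nlinarith [mul_le_mul_of_nonneg_left hx.2.1 hα, mul_le_mul_of_nonneg_left hy.2.1 hβ]
    · nlinarith [mul_le_mul_of_nonneg_left hx.2.2 hα, mul_le_mul_of_nonneg_left hy.2.2 hβ]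

/-- The crossing lemma: angle at (1,1) between left and right half triangles is ≥ 90°. -/
lemma SK_cross (p q : EuclideanSpace ℝ (Fin 2))
    (hp1 : 0 ≤ p 1) (hp2 : p 1 ≤ p 0) (hp3 : p 0 ≤ 1)
    (hq1 : 1 ≤ q 0) (hq2 : 0 ≤ q 1) (hq3 : q 0 + q 1 ≤ 2) :
    dist p q ^ 2 ≤ dist p (pt 1 1) ^ 2 + dist (pt 1 1) q ^ 2 := by
  rw [SK_distsq, SK_distsq, SK_distsq]
  have hv : pt 1 1 0 = 1 ∧ pt 1 1 1 = 1 := by constructor <;> simp [pt]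
  rw [hv.1, hv.2]
  have h1 : (1 - p 0) * (q 0 - 1) ≤ (1 - p 1) * (1 - q 1) :=
    mul_le_mul (by linarith) (by linarith) (by linarith) (by linarith)
  nlinarith [h1]

theorem stmt_10 (s : ℝ → EuclideanSpace ℝ (Fin 2)) (hs : IsSierpinskiKnopp s) :
    (∀ t₁ ∈ Icc (0:ℝ) 1, ∀ t₂ ∈ Icc (0:ℝ) 1, t₁ ≤ t₂ →
      dist (s t₁) (s t₂) ^ 2 ≤ 4 * (t₂ - t₁)) ∧
    ∃ t₁ ∈ Icc (0:ℝ) 1, ∃ t₂ ∈ Icc (0:ℝ) 1, t₁ < t₂ ∧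
      dist (s t₁) (s t₂) ^ 2 = 4 * (t₂ - t₁) := by
  obtain ⟨-, himg, hLimg, hRimg, hv0, hvh, hv1, f₀, f₁, hf₀, hf₁, hs0, hs1⟩ := hs
  -- membership facts
  have memL : ∀ t ∈ Icc (0:ℝ) (1/2), 0 ≤ s t 1 ∧ s t 1 ≤ s t 0 ∧ s t 0 ≤ 1 := by
    intro t ht
    have h := SK_hull_sub (0,0) (1,0) (1,1) (0,-1) (-1,1) (1,0) 0 0 1
      (by rintro z (rfl | rfl | rfl) <;> norm_num)
      (hLimg ▸ mem_image_of_mem s ht)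
    simp only [mem_setOf_eq] at h
    refine ⟨by linarith [h.1], by linarith [h.2.1], by linarith [h.2.2]⟩
  have memR : ∀ t ∈ Icc (1/2:ℝ) 1, 1 ≤ s t 0 ∧ 0 ≤ s t 1 ∧ s t 0 + s t 1 ≤ 2 := by
    intro t ht
    have h := SK_hull_sub (1,0) (1,1) (2,0) (-1,0) (0,-1) (1,1) (-1) 0 2
      (by rintro z (rfl | rfl | rfl) <;> norm_num)
      (hRimg ▸ mem_image_of_mem s ht)
    simp only [mem_setOf_eq] at h
    refine ⟨by linarith [h.1], by linarith [h.2.1], by linarith [h.2.2]⟩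
  have memT : ∀ t ∈ Icc (0:ℝ) 1, 0 ≤ s t 1 ∧ s t 1 ≤ s t 0 ∧ s t 0 + s t 1 ≤ 2 := by
    intro t ht
    have h := SK_hull_sub (0,0) (2,0) (1,1) (0,-1) (-1,1) (1,1) 0 0 2
      (by rintro z (rfl | rfl | rfl) <;> norm_num)
      (himg ▸ mem_image_of_mem s ht)
    simp only [mem_setOf_eq] at h
    refine ⟨by linarith [h.1], by linarith [h.2.1], by linarith [h.2.2]⟩
  have sq2 : Real.sqrt 2 ^ 2 = 2 := Real.sq_sqrt (by norm_num)
  -- scaling identities for squared distances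
  have hd0 : ∀ t ∈ Icc (0:ℝ) 1, ∀ u ∈ Icc (0:ℝ) 1,
      dist (s (t/2)) (s (u/2)) ^ 2 = dist (s t) (s u) ^ 2 / 2 := by
    intro t ht u hu
    rw [hs0 t ht, hs0 u hu, hf₀, div_pow, sq2]
  have hd1 : ∀ t ∈ Icc (0:ℝ) 1, ∀ u ∈ Icc (0:ℝ) 1,
      dist (s ((t+1)/2)) (s ((u+1)/2)) ^ 2 = dist (s t) (s u) ^ 2 / 2 := by
    intro t ht u hu
    rw [hs1 t ht, hs1 u hu, hf₁, div_pow, sq2]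
  have h1mem : (1:ℝ) ∈ Icc (0:ℝ) 1 := by norm_num
  have h0mem : (0:ℝ) ∈ Icc (0:ℝ) 1 := by norm_num
  -- crude diameter bound
  have crude : ∀ t ∈ Icc (0:ℝ) 1, ∀ u ∈ Icc (0:ℝ) 1, dist (s t) (s u) ^ 2 ≤ 8 := by
    intro t ht u hu
    obtain ⟨a1, a2, a3⟩ := memT t ht
    obtain ⟨b1, b2, b3⟩ := memT u hu
    rw [SK_distsq]
    nlinarith [a1, a2, a3, b1, b2, b3]
  -- distance from s(1/2) = (1,1) to s 1 = (2,0) and s 0 = (0,0)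
  have dh1 : dist (pt 1 1) (s 1) ^ 2 = 2 := by
    rw [hv1, SK_distsq]; norm_num [pt]
  have dh0 : dist (s 0) (pt 1 1) ^ 2 = 2 := by
    rw [hv0, SK_distsq]; norm_num [pt]
  -- one-sided bound A with error: dist(s t, s 1)² ≤ 4(1-t) + 8·2⁻ⁿ
  have A : ∀ n : ℕ, ∀ t ∈ Icc (0:ℝ) 1,
      dist (s t) (s 1) ^ 2 ≤ 4 * (1 - t) + 8 * (1/2)^n := by
    intro n
    induction n with
    | zero =>
      intro t ht
      have := crude t ht 1 h1mem
      have : (0:ℝ) ≤ 1 - t := by linarith [ht.2]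
      nlinarith [crude t ht 1 h1mem]
    | succ n ih =>
      intro t ht
      rcases le_or_gt t (1/2) with hle | hlt
      · -- crossing: p = s t ∈ L, q = s 1 = (2,0) ∈ R
        obtain ⟨p1, p2, p3⟩ := memL t ⟨ht.1, hle⟩
        have q1 : (1:ℝ) ≤ s 1 0 := by rw [hv1]; norm_num [pt]
        have q2 : (0:ℝ) ≤ s 1 1 := by rw [hv1]; norm_num [pt]
        have q3 : s 1 0 + s 1 1 ≤ 2 := by rw [hv1]; norm_num [pt]
        have hcr := SK_cross (s t) (s 1) p1 p2 p3 q1 q2 q3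
        -- dist(s t, s(1/2))² = dist(s 2t, s 1)²/2
        have h2t : (2*t) ∈ Icc (0:ℝ) 1 := ⟨by linarith [ht.1], by linarith⟩
        have e := hd0 (2*t) h2t 1 h1mem
        rw [show (2*t)/2 = t by ring, show (1:ℝ)/2 = 1/2 from rfl] at e
        rw [← hvh] at hcr
        have e2 := ih (2*t) h2t
        calc dist (s t) (s 1) ^ 2 ≤ dist (s t) (s (1/2)) ^ 2 + dist (s (1/2)) (s 1) ^ 2 := hcr
        _ ≤ (4 * (1 - 2*t) + 8 * (1/2)^n)/2 + 2 := by
            rw [e, hvh]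
            linarith [e2, dh1]
        _ ≤ 4 * (1 - t) + 8 * (1/2)^(n+1) := by
            have hp : (8:ℝ) * (1/2)^(n+1) = 8 * (1/2)^n / 2 := by ring
            linarith
      · -- same right half
        have hu : (2*t - 1) ∈ Icc (0:ℝ) 1 := ⟨by linarith, by linarith [ht.2]⟩
        have e := hd1 (2*t-1) hu 1 h1mem
        rw [show (2*t-1+1)/2 = t by ring, show ((1:ℝ)+1)/2 = 1 by norm_num] at e
        have e2 := ih (2*t-1) hu
        rw [e]
        have hp : (8:ℝ) * (1/2)^(n+1) = 8 * (1/2)^n / 2 := by ring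
        linarith
  -- one-sided bound B with error: dist(s 0, s t)² ≤ 4t + 8·2⁻ⁿ
  have B : ∀ n : ℕ, ∀ t ∈ Icc (0:ℝ) 1,
      dist (s 0) (s t) ^ 2 ≤ 4 * t + 8 * (1/2)^n := by
    intro n
    induction n with
    | zero =>
      intro t ht
      nlinarith [crude 0 h0mem t ht, ht.1]
    | succ n ih =>
      intro t ht
      rcases le_or_gt t (1/2) with hle | hlt
      · -- same left half
        have hu : (2*t) ∈ Icc (0:ℝ) 1 := ⟨by linarith [ht.1], by linarith⟩
        have e := hd0 0 h0mem (2*t) hu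
        rw [show (2*t)/2 = t by ring, show (0:ℝ)/2 = 0 by norm_num] at e
        have e2 := ih (2*t) hu
        rw [e]
        have hp : (8:ℝ) * (1/2)^(n+1) = 8 * (1/2)^n / 2 := by ring
        linarith
      · -- crossing: p = s 0 = (0,0) ∈ L, q = s t ∈ R
        obtain ⟨q1, q2, q3⟩ := memR t ⟨le_of_lt hlt, ht.2⟩
        have p1 : (0:ℝ) ≤ s 0 1 := by rw [hv0]; norm_num [pt]
        have p2 : s 0 1 ≤ s 0 0 := by rw [hv0]; norm_num [pt]
        have p3 : s 0 0 ≤ 1 := by rw [hv0]; norm_num [pt]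
        have hcr := SK_cross (s 0) (s t) p1 p2 p3 q1 q2 q3
        have hu : (2*t - 1) ∈ Icc (0:ℝ) 1 := ⟨by linarith, by linarith [ht.2]⟩
        have e := hd1 0 h0mem (2*t-1) hu
        rw [show (2*t-1+1)/2 = t by ring, show ((0:ℝ)+1)/2 = 1/2 by norm_num] at e
        rw [← hvh] at hcr
        have e2 := ih (2*t-1) hu
        calc dist (s 0) (s t) ^ 2 ≤ dist (s 0) (s (1/2)) ^ 2 + dist (s (1/2)) (s t) ^ 2 := hcr
        _ ≤ 2 + (4 * (2*t-1) + 8 * (1/2)^n)/2 := by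
            rw [e, hvh]
            linarith [e2, dh0]
        _ ≤ 4 * t + 8 * (1/2)^(n+1) := by
            have hp : (8:ℝ) * (1/2)^(n+1) = 8 * (1/2)^n / 2 := by ring
            linarith
  -- exact one-sided bounds
  have Aex : ∀ t ∈ Icc (0:ℝ) 1, dist (s t) (s 1) ^ 2 ≤ 4 * (1 - t) := by
    intro t ht
    refine le_of_forall_pos_le_add (fun ε hε => ?_)
    obtain ⟨n, hn⟩ := exists_pow_lt_of_lt_one (show (0:ℝ) < ε/8 by linarith)
      (show (1/2 : ℝ) < 1 by norm_num)
    have := A n t ht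
    linarith
  have Bex : ∀ t ∈ Icc (0:ℝ) 1, dist (s 0) (s t) ^ 2 ≤ 4 * t := by
    intro t ht
    refine le_of_forall_pos_le_add (fun ε hε => ?_)
    obtain ⟨n, hn⟩ := exists_pow_lt_of_lt_one (show (0:ℝ) < ε/8 by linarith)
      (show (1/2 : ℝ) < 1 by norm_num)
    have := B n t ht
    linarith
  -- main bound with error
  have Q : ∀ n : ℕ, ∀ t₁ ∈ Icc (0:ℝ) 1, ∀ t₂ ∈ Icc (0:ℝ) 1, t₁ ≤ t₂ →
      dist (s t₁) (s t₂) ^ 2 ≤ 4 * (t₂ - t₁) + 8 * (1/2)^n := by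
    intro n
    induction n with
    | zero =>
      intro t₁ ht₁ t₂ ht₂ h12
      nlinarith [crude t₁ ht₁ t₂ ht₂]
    | succ n ih =>
      intro t₁ ht₁ t₂ ht₂ h12
      rcases le_or_gt t₂ (1/2) with hle | hlt
      · -- both in left half
        have hu : (2*t₁) ∈ Icc (0:ℝ) 1 := ⟨by linarith [ht₁.1], by linarith⟩
        have hv : (2*t₂) ∈ Icc (0:ℝ) 1 := ⟨by linarith [ht₂.1], by linarith⟩
        have e := hd0 (2*t₁) hu (2*t₂) hv
        rw [show (2*t₁)/2 = t₁ by ring, show (2*t₂)/2 = t₂ by ring] at e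
        have e2 := ih (2*t₁) hu (2*t₂) hv (by linarith)
        rw [e]
        have hp : (8:ℝ) * (1/2)^(n+1) = 8 * (1/2)^n / 2 := by ring
        linarith
      · rcases le_or_gt (1/2) t₁ with hge | hlt₁
        · -- both in right half
          have hu : (2*t₁-1) ∈ Icc (0:ℝ) 1 := ⟨by linarith, by linarith [ht₁.2]⟩
          have hv : (2*t₂-1) ∈ Icc (0:ℝ) 1 := ⟨by linarith, by linarith [ht₂.2]⟩
          have e := hd1 (2*t₁-1) hu (2*t₂-1) hv
          rw [show (2*t₁-1+1)/2 = t₁ by ring, show (2*t₂-1+1)/2 = t₂ by ring] at e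
          have e2 := ih (2*t₁-1) hu (2*t₂-1) hv (by linarith)
          rw [e]
          have hp : (8:ℝ) * (1/2)^(n+1) = 8 * (1/2)^n / 2 := by ring
          linarith
        · -- crossing case: exact
          obtain ⟨p1, p2, p3⟩ := memL t₁ ⟨ht₁.1, le_of_lt hlt₁⟩
          obtain ⟨q1, q2, q3⟩ := memR t₂ ⟨le_of_lt hlt, ht₂.2⟩
          have hcr := SK_cross (s t₁) (s t₂) p1 p2 p3 q1 q2 q3
          rw [← hvh] at hcr
          -- dist(s t₁, s(1/2))² = dist(s 2t₁, s 1)²/2 ≤ 4(1-2t₁)/2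
          have hu : (2*t₁) ∈ Icc (0:ℝ) 1 := ⟨by linarith [ht₁.1], by linarith⟩
          have e₁ := hd0 (2*t₁) hu 1 h1mem
          rw [show (2*t₁)/2 = t₁ by ring] at e₁
          have b₁ := Aex (2*t₁) hu
          -- dist(s(1/2), s t₂)² = dist(s 0, s (2t₂-1))²/2 ≤ 4(2t₂-1)/2
          have hw : (2*t₂-1) ∈ Icc (0:ℝ) 1 := ⟨by linarith, by linarith [ht₂.2]⟩
          have e₂ := hd1 0 h0mem (2*t₂-1) hw
          rw [show ((0:ℝ)+1)/2 = 1/2 by norm_num, show (2*t₂-1+1)/2 = t₂ by ring] at e₂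
          have b₂ := Bex (2*t₂-1) hw
          have hpow : (0:ℝ) ≤ 8 * (1/2)^(n+1) := by positivity
          calc dist (s t₁) (s t₂) ^ 2
              ≤ dist (s t₁) (s (1/2)) ^ 2 + dist (s (1/2)) (s t₂) ^ 2 := hcr
            _ ≤ 4 * (1 - 2*t₁) / 2 + 4 * (2*t₂-1) / 2 := by
                rw [e₁, e₂]
                linarith [b₁, b₂]
            _ ≤ 4 * (t₂ - t₁) + 8 * (1/2)^(n+1) := by linarith
  constructor
  · intro t₁ ht₁ t₂ ht₂ h12
    refine le_of_forall_pos_le_add (fun ε hε => ?_)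
    obtain ⟨n, hn⟩ := exists_pow_lt_of_lt_one (show (0:ℝ) < ε/8 by linarith)
      (show (1/2 : ℝ) < 1 by norm_num)
    have := Q n t₁ ht₁ t₂ ht₂ h12
    linarith
  · refine ⟨0, h0mem, 1, h1mem, by norm_num, ?_⟩
    rw [hv0, hv1, SK_distsq]
    norm_num [pt]
end

section
/- Let p : [0,1] → Δ be a surjection onto the isosceles right triangle Δ with vertices A = (0,0), C = (2,0), and right-angle vertex (1,1), satisfying |p(t₂) - p(t₁)|² ≤ 4(t₂ - t₁), with p(0) = A and p(1) = C. Then p(1/2) = (1,1). -/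
open Set

lemma dist_sq_pt (a b c d : ℝ) :
    dist (pt a b) (pt c d) ^ 2 = (a - c) ^ 2 + (b - d) ^ 2 := by
  rw [EuclideanSpace.dist_eq, Real.sq_sqrt (by positivity)]
  simp [pt, Fin.sum_univ_two, Real.dist_eq, sq_abs]

theorem stmt_15 (p : ℝ → EuclideanSpace ℝ (Fin 2))
    (hsurj : p '' Icc 0 1 = convexHull ℝ {pt 0 0, pt 2 0, pt 1 1})
    (hloc : ∀ t₁ ∈ Icc (0:ℝ) 1, ∀ t₂ ∈ Icc (0:ℝ) 1, t₁ ≤ t₂ →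
      dist (p t₁) (p t₂) ^ 2 ≤ 4 * (t₂ - t₁))
    (h0 : p 0 = pt 0 0) (h1 : p 1 = pt 2 0) :
    p (1/2) = pt 1 1 := by
  have hmem : pt 1 1 ∈ p '' Icc (0:ℝ) 1 := by
    rw [hsurj]
    exact subset_convexHull ℝ _ (by simp)
  obtain ⟨t, ht, hpt⟩ := hmem
  have h01 : (0:ℝ) ∈ Icc (0:ℝ) 1 := by norm_num
  have h11 : (1:ℝ) ∈ Icc (0:ℝ) 1 := by norm_num
  have hA := hloc 0 h01 t ht ht.1
  have hB := hloc t ht 1 h11 ht.2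
  rw [h0, hpt, dist_sq_pt] at hA
  rw [hpt, h1, dist_sq_pt] at hB
  norm_num at hA hB
  have : t = 1/2 := by linarith
  rwa [this] at hpt
end

section
/- The supremum of |s(t₂) - s(t₁)|²/(t₂ - t₁) over all 0 ≤ t₁ < t₂ ≤ 1 for the Sierpiński–Knopp curve s is attained at some pair (t₁, t₂). -/
open Set MeasureTheory

namespace SKAux

lemma pt_app0 (x y : ℝ) : pt x y 0 = x := rfl
lemma pt_app1 (x y : ℝ) : pt x y 1 = y := rfl

lemma dist_sq (x y : EuclideanSpace ℝ (Fin 2)) :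
    dist x y ^ 2 = (x 0 - y 0)^2 + (x 1 - y 1)^2 := by
  rw [EuclideanSpace.dist_eq, Real.sq_sqrt (by positivity)]
  simp [Fin.sum_univ_two, Real.dist_eq, sq_abs]

lemma hull_bounds {p : EuclideanSpace ℝ (Fin 2)}
    (hp : p ∈ convexHull ℝ {pt 0 0, pt 2 0, pt 1 1}) :
    0 ≤ p 1 ∧ p 1 ≤ p 0 ∧ p 0 + p 1 ≤ 2 := by
  have h : convexHull ℝ {pt 0 0, pt 2 0, pt 1 1} ⊆
      {q : EuclideanSpace ℝ (Fin 2) | 0 ≤ q 1 ∧ q 1 ≤ q 0 ∧ q 0 + q 1 ≤ 2} := by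
    apply convexHull_min
    · rintro q hq
      rcases hq with rfl | rfl | rfl <;> refine ⟨?_, ?_, ?_⟩ <;>
        norm_num [pt_app0, pt_app1]
    · rintro x hx y hy a b ha hb hab
      simp only [mem_setOf_eq] at *
      have e0 : (a • x + b • y) 0 = a * x 0 + b * y 0 := rfl
      have e1 : (a • x + b • y) 1 = a * x 1 + b * y 1 := rfl
      refine ⟨?_, ?_, ?_⟩ <;> simp only [e0, e1] <;>
        nlinarith [mul_le_mul_of_nonneg_left hx.2.1 ha, mul_le_mul_of_nonneg_left hy.2.1 hb,
          mul_nonneg ha hx.1, mul_nonneg hb hy.1]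
  exact h hp

lemma eq_of_dists₀ {z w : EuclideanSpace ℝ (Fin 2)}
    (h1 : (z 0)^2 + (z 1)^2 = (w 0)^2 + (w 1)^2)
    (h2 : (z 0 - 1)^2 + (z 1 - 1)^2 = (w 0 - 1)^2 + (w 1 - 1)^2)
    (h3 : (z 0 - 1)^2 + (z 1)^2 = (w 0 - 1)^2 + (w 1)^2) : z = w := by
  have e0 : z 0 = w 0 := by nlinarith
  have e1 : z 1 = w 1 := by nlinarith
  ext i; fin_cases i
  · exact e0
  · exact e1

lemma eq_of_dists₁ {z w : EuclideanSpace ℝ (Fin 2)}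
    (h1 : (z 0 - 1)^2 + (z 1 - 1)^2 = (w 0 - 1)^2 + (w 1 - 1)^2)
    (h2 : (z 0 - 2)^2 + (z 1)^2 = (w 0 - 2)^2 + (w 1)^2)
    (h3 : (z 0 - 1)^2 + (z 1)^2 = (w 0 - 1)^2 + (w 1)^2) : z = w := by
  have e0 : z 0 = w 0 := by nlinarith
  have e1 : z 1 = w 1 := by nlinarith
  ext i; fin_cases i
  · exact e0
  · exact e1

noncomputable def e0m (x : EuclideanSpace ℝ (Fin 2)) : EuclideanSpace ℝ (Fin 2) :=
  pt ((x 0 + x 1)/2) ((x 0 - x 1)/2)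
noncomputable def e1m (x : EuclideanSpace ℝ (Fin 2)) : EuclideanSpace ℝ (Fin 2) :=
  pt ((x 0 - x 1)/2 + 1) (1 - (x 0 + x 1)/2)

lemma straddle_ineq (p q : EuclideanSpace ℝ (Fin 2)) (hp1 : 0 ≤ p 1) (hp0 : p 0 + p 1 ≤ 2)
    (hq0 : 0 ≤ q 0) (hq1 : 0 ≤ q 1) :
    dist (e0m p) (e1m q) ^ 2 ≤ (dist p (pt 2 0) ^2 + dist q (pt 0 0) ^2) / 2 := by
  rw [dist_sq, dist_sq, dist_sq]
  simp only [e0m, e1m, pt_app0, pt_app1]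
  nlinarith [mul_nonneg hp1 hq0, mul_nonneg (by linarith : (0:ℝ) ≤ 2 - p 0) hq1]

lemma half_div (X y : ℝ) : (X/2)/(y/2) = X/y := by
  rcases eq_or_ne y 0 with rfl | h
  · simp
  · field_simp

section
variable {s : ℝ → EuclideanSpace ℝ (Fin 2)}
  {f₀ f₁ : EuclideanSpace ℝ (Fin 2) → EuclideanSpace ℝ (Fin 2)}

lemma sim_sq (hd : ∀ x y, dist (f₀ x) (f₀ y) = dist x y / Real.sqrt 2) (x y) :
    dist (f₀ x) (f₀ y) ^ 2 = dist x y ^ 2 / 2 := by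
  rw [hd, div_pow, Real.sq_sqrt (by norm_num)]

set_option maxHeartbeats 800000 in
lemma quarter_eq
    (hmem : ∀ t ∈ Icc (0:ℝ) 1, 0 ≤ s t 1 ∧ s t 1 ≤ s t 0 ∧ s t 0 + s t 1 ≤ 2)
    (h0 : s 0 = pt 0 0) (hhalf : s (1/2) = pt 1 1) (h1 : s 1 = pt 2 0)
    (hd0 : ∀ x y, dist (f₀ x) (f₀ y) = dist x y / Real.sqrt 2)
    (h00 : s 0 = f₀ (s 0)) (hq : s (1/4) = f₀ (s (1/2)))
    (hq1 : s (1/2) = f₀ (s 1)) :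
    s (1/4) = pt 1 0 := by
  have hb := hmem (1/4) (by norm_num)
  have d1 : dist (s (1/4)) (pt 0 0) ^ 2 = 1 := by
    have key := sim_sq hd0 (s (1/2)) (s 0)
    rw [← hq, ← h00, h0, hhalf] at key
    rw [key, dist_sq]
    simp only [pt_app0, pt_app1]; norm_num
  have d2 : dist (s (1/4)) (pt 1 1) ^ 2 = 1 := by
    have key := sim_sq hd0 (s (1/2)) (s 1)
    rw [← hq, ← hq1, hhalf, h1] at key
    rw [key, dist_sq]
    simp only [pt_app0, pt_app1]; norm_num
  rw [dist_sq] at d1 d2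
  simp only [pt_app0, pt_app1] at d1 d2
  have hab : s (1/4) 0 + s (1/4) 1 = 1 := by nlinarith
  have ha2 : s (1/4) 0 * (s (1/4) 0 - 1) = 0 := by nlinarith
  have ha : s (1/4) 0 = 1 := by
    rcases mul_eq_zero.1 ha2 with h | h
    · exfalso; nlinarith [hb.1, hb.2.1]
    · linarith
  have hbv : s (1/4) 1 = 0 := by linarith
  ext i; fin_cases i
  · exact ha
  · exact hbv

set_option maxHeartbeats 800000 in
lemma threeq_eq
    (hmem : ∀ t ∈ Icc (0:ℝ) 1, 0 ≤ s t 1 ∧ s t 1 ≤ s t 0 ∧ s t 0 + s t 1 ≤ 2)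
    (h0 : s 0 = pt 0 0) (hhalf : s (1/2) = pt 1 1) (h1 : s 1 = pt 2 0)
    (hd1 : ∀ x y, dist (f₁ x) (f₁ y) = dist x y / Real.sqrt 2)
    (h11' : s (1/2) = f₁ (s 0)) (h21 : s 1 = f₁ (s 1))
    (hq3 : s (3/4) = f₁ (s (1/2))) :
    s (3/4) = pt 1 0 := by
  have hb := hmem (3/4) (by norm_num)
  have d1 : dist (s (3/4)) (pt 1 1) ^ 2 = 1 := by
    have key := sim_sq hd1 (s (1/2)) (s 0)
    rw [← hq3, ← h11', hhalf, h0] at key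
    rw [key, dist_sq]
    simp only [pt_app0, pt_app1]; norm_num
  have d2 : dist (s (3/4)) (pt 2 0) ^ 2 = 1 := by
    have key := sim_sq hd1 (s (1/2)) (s 1)
    rw [← hq3, ← h21, hhalf, h1] at key
    rw [key, dist_sq]
    simp only [pt_app0, pt_app1]; norm_num
  rw [dist_sq] at d1 d2
  simp only [pt_app0, pt_app1] at d1 d2
  have hab : s (3/4) 0 = s (3/4) 1 + 1 := by nlinarith
  have hb2 : s (3/4) 1 * (s (3/4) 1 - 1) = 0 := by nlinarith
  have hbv : s (3/4) 1 = 0 := by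
    rcases mul_eq_zero.1 hb2 with h | h
    · exact h
    · exfalso; nlinarith [hb.2.2]
  have ha : s (3/4) 0 = 1 := by linarith
  ext i; fin_cases i
  · exact ha
  · exact hbv

lemma f0_formula
    (hd0 : ∀ x y, dist (f₀ x) (f₀ y) = dist x y / Real.sqrt 2)
    (A0 : f₀ (pt 0 0) = pt 0 0) (A1 : f₀ (pt 2 0) = pt 1 1)
    (A2 : f₀ (pt 1 1) = pt 1 0) (x : EuclideanSpace ℝ (Fin 2)) :
    f₀ x = e0m x := by
  have k0 := sim_sq hd0 x (pt 0 0)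
  have k1 := sim_sq hd0 x (pt 2 0)
  have k2 := sim_sq hd0 x (pt 1 1)
  rw [A0] at k0; rw [A1] at k1; rw [A2] at k2
  rw [dist_sq, dist_sq] at k0 k1 k2
  simp only [pt_app0, pt_app1] at k0 k1 k2
  apply eq_of_dists₀ <;> simp only [e0m, pt_app0, pt_app1]
  · linear_combination k0
  · linear_combination k1
  · linear_combination k2

lemma f1_formula
    (hd1 : ∀ x y, dist (f₁ x) (f₁ y) = dist x y / Real.sqrt 2)
    (B0 : f₁ (pt 0 0) = pt 1 1) (B1 : f₁ (pt 2 0) = pt 2 0)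
    (B2 : f₁ (pt 1 1) = pt 1 0) (x : EuclideanSpace ℝ (Fin 2)) :
    f₁ x = e1m x := by
  have k0 := sim_sq hd1 x (pt 0 0)
  have k1 := sim_sq hd1 x (pt 2 0)
  have k2 := sim_sq hd1 x (pt 1 1)
  rw [B0] at k0; rw [B1] at k1; rw [B2] at k2
  rw [dist_sq, dist_sq] at k0 k1 k2
  simp only [pt_app0, pt_app1] at k0 k1 k2
  apply eq_of_dists₁ <;> simp only [e1m, pt_app0, pt_app1]
  · linear_combination k0
  · linear_combination k1
  · linear_combination k2

end

end SKAux

set_option maxHeartbeats 4000000 in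
theorem stmt_19 (s : ℝ → EuclideanSpace ℝ (Fin 2)) (hs : IsSierpinskiKnopp s) :
    ∃ t₁ ∈ Icc (0:ℝ) 1, ∃ t₂ ∈ Icc (0:ℝ) 1, t₁ < t₂ ∧
      ∀ u₁ ∈ Icc (0:ℝ) 1, ∀ u₂ ∈ Icc (0:ℝ) 1, u₁ < u₂ →
        dist (s u₁) (s u₂) ^ 2 / (u₂ - u₁) ≤ dist (s t₁) (s t₂) ^ 2 / (t₂ - t₁) := by
  classical
  obtain ⟨hc, himg, -, -, h0, hhalf, h1, f₀, f₁, hd0, hd1, he0, he1⟩ := hs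
  have hmem : ∀ t ∈ Icc (0:ℝ) 1, 0 ≤ s t 1 ∧ s t 1 ≤ s t 0 ∧ s t 0 + s t 1 ≤ 2 := fun t ht =>
    SKAux.hull_bounds (by rw [← himg]; exact mem_image_of_mem s ht)
  have h00 : s 0 = f₀ (s 0) := by
    have := he0 0 (by norm_num : (0:ℝ) ∈ Icc (0:ℝ) 1); norm_num at this; exact this
  have hq : s (1/4) = f₀ (s (1/2)) := by
    have := he0 (1/2) (by norm_num : (1/2:ℝ) ∈ Icc (0:ℝ) 1); norm_num at this; exact this
  have hq1 : s (1/2) = f₀ (s 1) := he0 1 (by norm_num)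
  have h11' : s (1/2) = f₁ (s 0) := by
    have := he1 0 (by norm_num : (0:ℝ) ∈ Icc (0:ℝ) 1); norm_num at this; exact this
  have h21 : s 1 = f₁ (s 1) := by
    have := he1 1 (by norm_num : (1:ℝ) ∈ Icc (0:ℝ) 1); norm_num at this; exact this
  have hq3 : s (3/4) = f₁ (s (1/2)) := by
    have := he1 (1/2) (by norm_num : (1/2:ℝ) ∈ Icc (0:ℝ) 1); norm_num at this; exact this
  have hquarter := SKAux.quarter_eq hmem h0 hhalf h1 hd0 h00 hq hq1
  have hthreeq := SKAux.threeq_eq hmem h0 hhalf h1 hd1 h11' h21 hq3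
  have A0 : f₀ (pt 0 0) = pt 0 0 := by rw [← h0, ← h00]
  have A1 : f₀ (pt 2 0) = pt 1 1 := by rw [← h1, ← hq1, hhalf]
  have A2 : f₀ (pt 1 1) = pt 1 0 := by rw [← hhalf, ← hq, hquarter]
  have B0 : f₁ (pt 0 0) = pt 1 1 := by rw [← h0, ← h11', hhalf]
  have B1 : f₁ (pt 2 0) = pt 2 0 := by rw [← h1, ← h21]
  have B2 : f₁ (pt 1 1) = pt 1 0 := by rw [← hhalf, ← hq3, hthreeq]
  have f0eq := SKAux.f0_formula hd0 A0 A1 A2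
  have f1eq := SKAux.f1_formula hd1 B0 B1 B2
  -- ratio invariance under doubling
  have red0 : ∀ a ∈ Icc (0:ℝ) 1, ∀ b ∈ Icc (0:ℝ) 1,
      dist (s (a/2)) (s (b/2)) ^ 2 / (b/2 - a/2) = dist (s a) (s b) ^ 2 / (b - a) := by
    intro a ha b hb
    rw [he0 a ha, he0 b hb, SKAux.sim_sq hd0,
      show b/2 - a/2 = (b-a)/2 by ring, SKAux.half_div]
  have red1 : ∀ a ∈ Icc (0:ℝ) 1, ∀ b ∈ Icc (0:ℝ) 1,
      dist (s ((a+1)/2)) (s ((b+1)/2)) ^ 2 / ((b+1)/2 - (a+1)/2)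
        = dist (s a) (s b) ^ 2 / (b - a) := by
    intro a ha b hb
    rw [he1 a ha, he1 b hb, SKAux.sim_sq hd1,
      show (b+1)/2 - (a+1)/2 = (b-a)/2 by ring, SKAux.half_div]
  -- maxima of the two one-endpoint ratio families
  have hsA : ContinuousOn s (Icc 0 (1/2)) :=
    hc.mono (fun x hx => ⟨hx.1, le_trans hx.2 (by norm_num)⟩)
  have hsB : ContinuousOn s (Icc (1/2) 1) :=
    hc.mono (fun x hx => ⟨le_trans (by norm_num) hx.1, hx.2⟩)
  have hgAcont : ContinuousOn (fun u => dist (s u) (s 1) ^ 2 / (1 - u)) (Icc 0 (1/2)) := by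
    apply ContinuousOn.div
    · exact ((continuous_id.dist continuous_const).comp_continuousOn hsA).pow 2
    · exact continuousOn_const.sub continuousOn_id
    · intro x hx
      simp only [mem_Icc] at hx
      intro hcon
      linarith [hx.2]
  have hgBcont : ContinuousOn (fun v => dist (s 0) (s v) ^ 2 / v) (Icc (1/2) 1) := by
    apply ContinuousOn.div
    · exact ((continuous_const.dist continuous_id).comp_continuousOn hsB).pow 2
    · exact continuousOn_id
    · intro x hx
      simp only [mem_Icc] at hx
      intro hcon
      rw [hcon] at hx
      linarith [hx.1]
  obtain ⟨uA, huA, huAmax⟩ := isCompact_Icc.exists_isMaxOn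
    (⟨0, by norm_num⟩ : (Icc (0:ℝ) (1/2)).Nonempty) hgAcont
  obtain ⟨vB, hvB, hvBmax⟩ := isCompact_Icc.exists_isMaxOn
    (⟨1, by norm_num⟩ : (Icc (1/2:ℝ) 1).Nonempty) hgBcont
  simp only [mem_Icc] at huA hvB
  have huAmax' : ∀ x ∈ Icc (0:ℝ) (1/2),
      dist (s x) (s 1) ^ 2 / (1 - x) ≤ dist (s uA) (s 1) ^ 2 / (1 - uA) :=
    fun x hx => huAmax hx
  have hvBmax' : ∀ x ∈ Icc (1/2:ℝ) 1,
      dist (s 0) (s x) ^ 2 / x ≤ dist (s 0) (s vB) ^ 2 / vB :=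
    fun x hx => hvBmax hx
  set A : ℝ := dist (s uA) (s 1) ^ 2 / (1 - uA) with hAdef
  set B : ℝ := dist (s 0) (s vB) ^ 2 / vB with hBdef
  -- bound for pairs with right endpoint 1
  have boundA : ∀ u ∈ Ico (0:ℝ) 1, dist (s u) (s 1) ^ 2 / (1 - u) ≤ A := by
    have key : ∀ k : ℕ, ∀ u ∈ Ico (0:ℝ) 1, (1/2:ℝ)^k ≤ 1 - u →
        dist (s u) (s 1) ^ 2 / (1 - u) ≤ A := by
      intro k
      induction k with
      | zero =>
        intro u hu h
        norm_num at h
        have hu0 : u = 0 := le_antisymm (by linarith) hu.1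
        subst hu0
        exact huAmax' 0 (by norm_num)
      | succ k ih =>
        intro u hu h
        by_cases hhf : u ≤ 1/2
        · exact huAmax' u ⟨hu.1, hhf⟩
        · push_neg at hhf
          have hmem2 : (2*u - 1) ∈ Icc (0:ℝ) 1 := ⟨by linarith, by linarith [hu.2]⟩
          have e : dist (s u) (s 1) ^ 2 / (1 - u)
              = dist (s (2*u-1)) (s 1) ^ 2 / (1 - (2*u-1)) := by
            have hr := red1 (2*u-1) hmem2 1 (by norm_num)
            rw [show (2*u-1+1)/2 = u by ring, show ((1:ℝ)+1)/2 = 1 by norm_num] at hr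
            exact hr
          rw [e]
          refine ih (2*u-1) ⟨by linarith, by linarith [hu.2]⟩ ?_
          have hp : (1/2:ℝ)^(k+1) = (1/2)^k * (1/2) := pow_succ _ _
          nlinarith [h]
    intro u hu
    obtain ⟨k, hk⟩ := exists_pow_lt_of_lt_one (by linarith [hu.2] : (0:ℝ) < 1 - u)
      (by norm_num : (1/2:ℝ) < 1)
    exact key k u hu hk.le
  -- bound for pairs with left endpoint 0
  have boundB : ∀ v ∈ Ioc (0:ℝ) 1, dist (s 0) (s v) ^ 2 / v ≤ B := by
    have key : ∀ k : ℕ, ∀ v ∈ Ioc (0:ℝ) 1, (1/2:ℝ)^k ≤ v →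
        dist (s 0) (s v) ^ 2 / v ≤ B := by
      intro k
      induction k with
      | zero =>
        intro v hv h
        norm_num at h
        have hv1 : v = 1 := le_antisymm hv.2 h
        subst hv1
        exact hvBmax' 1 (by norm_num)
      | succ k ih =>
        intro v hv h
        by_cases hhf : 1/2 ≤ v
        · exact hvBmax' v ⟨hhf, hv.2⟩
        · push_neg at hhf
          have hmem2 : (2*v) ∈ Icc (0:ℝ) 1 := ⟨by linarith [hv.1], by linarith⟩
          have e : dist (s 0) (s v) ^ 2 / v
              = dist (s 0) (s (2*v)) ^ 2 / (2*v) := by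
            have hr := red0 0 (by norm_num) (2*v) hmem2
            rw [show (2*v)/2 = v by ring, show (0:ℝ)/2 = 0 by norm_num] at hr
            rw [sub_zero, sub_zero] at hr
            exact hr
          rw [e]
          refine ih (2*v) ⟨by linarith [hv.1], by linarith⟩ ?_
          have hp : (1/2:ℝ)^(k+1) = (1/2)^k * (1/2) := pow_succ _ _
          nlinarith [h]
    intro v hv
    obtain ⟨k, hk⟩ := exists_pow_lt_of_lt_one hv.1 (by norm_num : (1/2:ℝ) < 1)
    exact key k v hv hk.le
  have hAn : 0 ≤ A := div_nonneg (by positivity) (by linarith [huA.2])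
  have hBn : 0 ≤ B := div_nonneg (by positivity) (by linarith [hvB.1])
  -- the straddle bound
  have straddleR : ∀ t₁ ∈ Icc (0:ℝ) (1/2), ∀ t₂ ∈ Icc (1/2:ℝ) 1, t₁ < t₂ →
      dist (s t₁) (s t₂) ^ 2 / (t₂ - t₁) ≤ max A B := by
    intro t₁ ht₁ t₂ ht₂ hlt
    have hm1 : (2*t₁) ∈ Icc (0:ℝ) 1 := ⟨by linarith [ht₁.1], by linarith [ht₁.2]⟩
    have hm2 : (2*t₂ - 1) ∈ Icc (0:ℝ) 1 := ⟨by linarith [ht₂.1], by linarith [ht₂.2]⟩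
    have hst1 : s t₁ = SKAux.e0m (s (2*t₁)) := by
      have := he0 (2*t₁) hm1
      rw [show (2*t₁)/2 = t₁ by ring, f0eq] at this
      exact this
    have hst2 : s t₂ = SKAux.e1m (s (2*t₂ - 1)) := by
      have := he1 (2*t₂-1) hm2
      rw [show (2*t₂-1+1)/2 = t₂ by ring, f1eq] at this
      exact this
    have hbp := hmem (2*t₁) hm1
    have hbq := hmem (2*t₂-1) hm2
    have key : dist (s t₁) (s t₂) ^ 2 ≤
        (dist (s (2*t₁)) (pt 2 0) ^2 + dist (s (2*t₂-1)) (pt 0 0) ^2) / 2 := by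
      rw [hst1, hst2]
      exact SKAux.straddle_ineq _ _ hbp.1 hbp.2.2 (le_trans hbq.1 hbq.2.1) hbq.1
    have hA : dist (s (2*t₁)) (pt 2 0) ^2 ≤ A * (1 - 2*t₁) := by
      rw [← h1]
      rcases eq_or_lt_of_le (by linarith [ht₁.2] : 2*t₁ ≤ 1) with heq | hlt2
      · rw [show (2*t₁ : ℝ) = 1 from heq]
        simp only [dist_self]
        norm_num
      · have hble := boundA (2*t₁) ⟨hm1.1, hlt2⟩
        calc dist (s (2*t₁)) (s 1) ^2
            = dist (s (2*t₁)) (s 1) ^ 2 / (1 - 2*t₁) * (1 - 2*t₁) :=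
              (div_mul_cancel₀ _ (ne_of_gt (by linarith : (0:ℝ) < 1 - 2*t₁))).symm
          _ ≤ A * (1 - 2*t₁) := mul_le_mul_of_nonneg_right hble (by linarith)
    have hB : dist (s (2*t₂-1)) (pt 0 0) ^2 ≤ B * (2*t₂ - 1) := by
      rw [← h0]
      rcases eq_or_lt_of_le (by linarith [ht₂.1] : (0:ℝ) ≤ 2*t₂ - 1) with heq | hlt2
      · rw [show (2*t₂ - 1 : ℝ) = 0 from heq.symm]
        simp only [dist_self]
        norm_num
      · have hble := boundB (2*t₂-1) ⟨hlt2, hm2.2⟩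
        calc dist (s (2*t₂-1)) (s 0) ^2
            = dist (s 0) (s (2*t₂-1)) ^2 := by rw [dist_comm]
          _ = dist (s 0) (s (2*t₂-1)) ^ 2 / (2*t₂-1) * (2*t₂-1) :=
              (div_mul_cancel₀ _ (ne_of_gt (by linarith : (0:ℝ) < 2*t₂-1))).symm
          _ ≤ B * (2*t₂-1) := mul_le_mul_of_nonneg_right hble (by linarith)
    have hMA : A ≤ max A B := le_max_left _ _
    have hMB : B ≤ max A B := le_max_right _ _
    rw [div_le_iff₀ (by linarith : (0:ℝ) < t₂ - t₁)]
    have c1 : (0:ℝ) ≤ 1 - 2*t₁ := by linarith [ht₁.2]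
    have c2 : (0:ℝ) ≤ 2*t₂ - 1 := by linarith [ht₂.1]
    nlinarith [mul_le_mul_of_nonneg_right hMA c1, mul_le_mul_of_nonneg_right hMB c2]
  -- global bound by induction on scale
  have global : ∀ k : ℕ, ∀ t₁ ∈ Icc (0:ℝ) 1, ∀ t₂ ∈ Icc (0:ℝ) 1, t₁ < t₂ →
      (1/2:ℝ)^k ≤ t₂ - t₁ → dist (s t₁) (s t₂) ^ 2 / (t₂ - t₁) ≤ max A B := by
    intro k
    induction k with
    | zero =>
      intro t₁ ht₁ t₂ ht₂ hlt h
      norm_num at h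
      exact straddleR t₁ ⟨ht₁.1, by linarith [ht₂.2]⟩ t₂ ⟨by linarith [ht₁.1], ht₂.2⟩ hlt
    | succ k ih =>
      intro t₁ ht₁ t₂ ht₂ hlt h
      by_cases hr : t₂ ≤ 1/2
      · have hm1 : (2*t₁) ∈ Icc (0:ℝ) 1 := ⟨by linarith [ht₁.1], by linarith⟩
        have hm2 : (2*t₂) ∈ Icc (0:ℝ) 1 := ⟨by linarith [ht₂.1], by linarith⟩
        have e := red0 (2*t₁) hm1 (2*t₂) hm2
        rw [show (2*t₁)/2 = t₁ by ring, show (2*t₂)/2 = t₂ by ring] at e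
        rw [e]
        refine ih (2*t₁) hm1 (2*t₂) hm2 (by linarith) ?_
        have hp : (1/2:ℝ)^(k+1) = (1/2)^k * (1/2) := pow_succ _ _
        nlinarith [h]
      · by_cases hl : 1/2 ≤ t₁
        · have hm1 : (2*t₁-1) ∈ Icc (0:ℝ) 1 := ⟨by linarith, by linarith [ht₁.2]⟩
          have hm2 : (2*t₂-1) ∈ Icc (0:ℝ) 1 := ⟨by linarith [ht₂.1], by linarith [ht₂.2]⟩
          have e := red1 (2*t₁-1) hm1 (2*t₂-1) hm2
          rw [show (2*t₁-1+1)/2 = t₁ by ring, show (2*t₂-1+1)/2 = t₂ by ring] at e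
          rw [e]
          refine ih (2*t₁-1) hm1 (2*t₂-1) hm2 (by linarith) ?_
          have hp : (1/2:ℝ)^(k+1) = (1/2)^k * (1/2) := pow_succ _ _
          nlinarith [h]
        · push_neg at hr hl
          exact straddleR t₁ ⟨ht₁.1, hl.le⟩ t₂ ⟨hr.le, ht₂.2⟩ hlt
  -- conclusion
  rcases le_total A B with hAB | hAB
  · refine ⟨0, by norm_num, vB, ⟨by linarith [hvB.1], hvB.2⟩, by linarith [hvB.1], ?_⟩
    intro u₁ hu₁ u₂ hu₂ hlt
    rw [sub_zero]
    obtain ⟨k, hk⟩ := exists_pow_lt_of_lt_one (by linarith : (0:ℝ) < u₂ - u₁)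
      (by norm_num : (1/2:ℝ) < 1)
    exact (global k u₁ hu₁ u₂ hu₂ hlt hk.le).trans
      (le_of_eq ((max_eq_right hAB).trans hBdef))
  · refine ⟨uA, ⟨huA.1, by linarith [huA.2]⟩, 1, by norm_num, by linarith [huA.2], ?_⟩
    intro u₁ hu₁ u₂ hu₂ hlt
    obtain ⟨k, hk⟩ := exists_pow_lt_of_lt_one (by linarith : (0:ℝ) < u₂ - u₁)
      (by norm_num : (1/2:ℝ) < 1)
    exact (global k u₁ hu₁ u₂ hu₂ hlt hk.le).trans
      (le_of_eq ((max_eq_left hAB).trans hAdef))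
end
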